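/- arXiv:2410.22294 — 5 statements merged into one kernel-verified Lean document; each statement's English description precedes it below -/
import Mathlib

section
/- Let γ : ℝ → ℝ² be a mapping, (p_n)_{n∈ℤ} a strictly increasing two-sided sequence of real numbers, and α ∈ (0, π) be such that for every n ∈ ℤ the restriction of γ to [p_n, p_{n+1}] is affine and the angle at γ(p_n) in the (possibly degenerate) triangle with vertices γ(p_{n−1}), γ(p_n), γ(p_{n+1}) is at least α. Suppose C ≥ 1 satisfies: (a) 1/C ≤ ‖γ′(t)‖ ≤ C for almost every t ∈ ℝ; (b) for all n, m ∈ ℤ with |n−m| ≥ 2 the segments [γ(p_{n−1}), γ(p_n)] and [γ(p_{m−1}), γ(p_m)] are at Euclidean distance at least 1/C from each other; (c) for all t₁, t₂ ∈ ℝ with |t₂ − t₁| ≥ C one has ‖γ(t₂) − γ(t₁)‖ ≥ (1/C)·|t₂ − t₁|. Then γ is (4C²/√(1 − cos α))-bilipschitz. -/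
noncomputable section

open MeasureTheory

/-- `f` is `L`-bilipschitz on the set `s`. -/
def IsBilipOn {α β : Type*} [PseudoMetricSpace α] [PseudoMetricSpace β]
    (L : ℝ) (f : α → β) (s : Set α) : Prop :=
  ∀ x ∈ s, ∀ y ∈ s,
    (1 / L) * dist x y ≤ dist (f x) (f y) ∧ dist (f x) (f y) ≤ L * dist x y

private lemma quad_aux (a b c : ℝ) (ha : 0 ≤ a) (hb : 0 ≤ b) (hc1 : -1 ≤ c)
    (hc2 : c ≤ 1) : (1 - c)/2 * (a + b)^2 ≤ a^2 + b^2 - 2*a*b*c := by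
  nlinarith [mul_nonneg ha hb, sq_nonneg (a - b)]

set_option maxHeartbeats 1000000 in
theorem stmt2 (γ : ℝ → EuclideanSpace ℝ (Fin 2)) (p : ℤ → ℝ) (α C : ℝ)
    (hp : StrictMono p) (hα : α ∈ Set.Ioo 0 Real.pi) (hC : 1 ≤ C)
    (haff : ∀ n : ℤ, ∃ a v : EuclideanSpace ℝ (Fin 2),
      ∀ t ∈ Set.Icc (p n) (p (n + 1)), γ t = a + t • v)
    (hangle : ∀ n : ℤ,
      α ≤ EuclideanGeometry.angle (γ (p (n - 1))) (γ (p n)) (γ (p (n + 1))))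
    (hspeed : ∀ᵐ t : ℝ ∂volume, (1 / C) ≤ ‖deriv γ t‖ ∧ ‖deriv γ t‖ ≤ C)
    (hbuffer : ∀ n m : ℤ, 2 ≤ |n - m| →
      ∀ x ∈ segment ℝ (γ (p (n - 1))) (γ (p n)),
        ∀ y ∈ segment ℝ (γ (p (m - 1))) (γ (p m)), (1 / C) ≤ dist x y)
    (hfar : ∀ t₁ t₂ : ℝ, C ≤ |t₂ - t₁| →
      (1 / C) * |t₂ - t₁| ≤ dist (γ t₁) (γ t₂)) :
    IsBilipOn (4 * C ^ 2 / Real.sqrt (1 - Real.cos α)) γ Set.univ := by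
  have hC0 : (0:ℝ) < C := by linarith
  obtain ⟨hα0, hαπ⟩ := hα
  have hcos : Real.cos α < 1 := by
    have h := Real.strictAntiOn_cos (Set.mem_Icc.2 ⟨le_refl 0, Real.pi_pos.le⟩)
      (Set.mem_Icc.2 ⟨hα0.le, hαπ.le⟩) hα0
    simpa using h
  set s := Real.sqrt (1 - Real.cos α) with hsdef
  have hs0 : 0 < s := Real.sqrt_pos.2 (by linarith)
  have hssq : s ^ 2 = 1 - Real.cos α := Real.sq_sqrt (by linarith)
  have hs2 : s ≤ 2 := by
    rw [hsdef, show (2:ℝ) = Real.sqrt 4 by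
      rw [show (4:ℝ) = 2^2 by norm_num, Real.sqrt_sq]; norm_num]
    exact Real.sqrt_le_sqrt (by nlinarith [Real.neg_one_le_cos α])
  set L := 4 * C ^ 2 / s with hLdef
  have hL0 : 0 < L := by positivity
  have hL2C2 : 2 * C ^ 2 ≤ L := by
    rw [hLdef, le_div_iff₀ hs0]; nlinarith
  have hLC : C ≤ L := by nlinarith
  have hLC2 : C ^ 2 ≤ L := by nlinarith
  have hinvL : 1 / L ≤ 1 / C := one_div_le_one_div_of_le hC0 hLC
  have hC21 : 1 ≤ C ^ 2 := by nlinarith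
  have hC24 : 2 * C ^ 2 ≤ 16 * C ^ 4 := by nlinarith [sq_nonneg C, sq_nonneg (C^2)]
  -- affine pieces with speed bounds
  have key : ∀ n : ℤ, ∃ w : EuclideanSpace ℝ (Fin 2),
      (∀ x ∈ Set.Icc (p n) (p (n+1)), ∀ y ∈ Set.Icc (p n) (p (n+1)),
        γ y - γ x = (y - x) • w) ∧ 1/C ≤ ‖w‖ ∧ ‖w‖ ≤ C := by
    intro n
    obtain ⟨a, w, hav⟩ := haff n
    refine ⟨w, ?_, ?_, ?_⟩
    · intro x hx y hy
      rw [hav x hx, hav y hy]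
      module
    all_goals {
      have hlt : p n < p (n+1) := hp (by omega)
      have hex : ∃ t ∈ Set.Ioo (p n) (p (n+1)),
          (1/C) ≤ ‖deriv γ t‖ ∧ ‖deriv γ t‖ ≤ C := by
        by_contra h
        push_neg at h
        have hsub : Set.Ioo (p n) (p (n+1)) ⊆
            {t | ¬ ((1/C) ≤ ‖deriv γ t‖ ∧ ‖deriv γ t‖ ≤ C)} := by
          intro t ht
          simp only [Set.mem_setOf_eq, not_and, not_le]
          intro h1
          exact h t ht h1
        have h0 := measure_mono_null hsub (ae_iff.mp hspeed)
        rw [Real.volume_Ioo] at h0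
        simp only [ENNReal.ofReal_eq_zero] at h0
        linarith
      obtain ⟨t, ht, h1, h2⟩ := hex
      have heq : γ =ᶠ[nhds t] fun u => a + u • w := by
        filter_upwards [Ioo_mem_nhds ht.1 ht.2] with u hu
        exact hav u (Set.Ioo_subset_Icc_self hu)
      have hder : deriv γ t = w := by
        rw [heq.deriv_eq]
        have hd : HasDerivAt (fun u : ℝ => a + u • w) w t := by
          simpa using ((hasDerivAt_id t).smul_const w).const_add a
        exact hd.deriv
      rw [hder] at h1 h2
      first | exact h1 | exact h2
    }
  choose v hv hv1 hv2 using key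
  have hdist : ∀ n : ℤ, ∀ x ∈ Set.Icc (p n) (p (n+1)), ∀ y ∈ Set.Icc (p n) (p (n+1)),
      dist (γ x) (γ y) = |y - x| * ‖v n‖ := by
    intro n x hx y hy
    rw [dist_eq_norm, hv n y hy x hx, norm_smul, Real.norm_eq_abs, abs_sub_comm]
  -- gap lower bound
  have hgap : ∀ n : ℤ, 1/C^2 ≤ p (n+1) - p n := by
    intro n
    have hlt : p n < p (n+1) := hp (by omega)
    have hb := hbuffer (n+2) n (by rw [show n+2-n = 2 by ring]; simp)
      (γ (p (n+2-1))) (left_mem_segment ℝ _ _) (γ (p n)) (right_mem_segment ℝ _ _)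
    rw [show (n+2-1 : ℤ) = n+1 by ring] at hb
    rw [hdist n (p (n+1)) ⟨hlt.le, le_refl _⟩ (p n) ⟨le_refl _, hlt.le⟩,
      abs_sub_comm, abs_of_pos (by linarith)] at hb
    rw [div_le_iff₀ (by positivity)]
    rw [div_le_iff₀ hC0] at hb
    have hint : (p (n+1) - p n) * ‖v n‖ * C ≤ (p (n+1) - p n) * C^2 := by
      rw [pow_two, ← mul_assoc]
      exact mul_le_mul_of_nonneg_right
        (mul_le_mul_of_nonneg_left (hv2 n) (by linarith : (0:ℝ) ≤ p (n+1) - p n)) hC0.le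
    linarith
  have hC2pos : (0:ℝ) < 1/C^2 := by positivity
  -- growth
  have hstep : ∀ n : ℤ, ∀ k : ℕ, p n + k * (1/C^2) ≤ p (n + k) := by
    intro n k
    induction k with
    | zero => simp
    | succ k ih =>
      have h1 := hgap (n + k)
      calc p n + ((k+1 : ℕ):ℝ) * (1/C^2)
          = (p n + (k:ℝ) * (1/C^2)) + 1/C^2 := by push_cast; ring
        _ ≤ p (n + (k:ℤ)) + 1/C^2 := by linarith
        _ ≤ p ((n + (k:ℤ)) + 1) := by linarith
        _ = p (n + ((k+1:ℕ):ℤ)) := by rw [show (((k:ℕ)+1 : ℕ):ℤ) = (k:ℤ)+1 by push_cast; ring]; congr 1; ring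
  -- greatest index below
  have hfloor : ∀ x : ℝ, ∃ n : ℤ, p n ≤ x ∧ x < p (n+1) := by
    intro x
    have hinh : ∃ z : ℤ, p z ≤ x := by
      obtain ⟨k, hk⟩ := exists_nat_ge ((p 0 - x) * C^2)
      refine ⟨0 - k, ?_⟩
      have h1 := hstep (0 - k) k
      rw [show (0 - (k:ℤ)) + (k:ℤ) = 0 by ring] at h1
      have h3 : p 0 - x ≤ (k:ℝ) * (1/C^2) := by
        rw [mul_one_div, le_div_iff₀ (by positivity)]; exact hk
      linarith
    have hbdd : ∃ b : ℤ, ∀ z : ℤ, p z ≤ x → z ≤ b := by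
      obtain ⟨k, hk⟩ := exists_nat_ge ((x - p 0 + 1) * C^2)
      refine ⟨k, ?_⟩
      intro z hz
      by_contra hzk
      push_neg at hzk
      have h1 : p (k:ℤ) ≤ p z := hp.monotone (by exact_mod_cast hzk.le)
      have h2 := hstep 0 k
      rw [zero_add] at h2
      have h3 : x - p 0 + 1 ≤ (k:ℝ) * (1/C^2) := by
        rw [mul_one_div, le_div_iff₀ (by positivity)]; exact hk
      linarith
    obtain ⟨n, hn1, hn2⟩ := Int.exists_greatest_of_bdd hbdd hinh
    refine ⟨n, hn1, ?_⟩
    by_contra h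
    push_neg at h
    have := hn2 (n+1) h
    omega
  -- segment membership
  have hseg : ∀ n : ℤ, ∀ x ∈ Set.Icc (p n) (p (n+1)),
      γ x ∈ segment ℝ (γ (p n)) (γ (p (n+1))) := by
    intro n x hx
    have hlt : p n < p (n+1) := hp (by omega)
    have hne : p (n+1) - p n ≠ 0 := by linarith
    set d := p (n+1) - p n with hd
    have hd0 : 0 < d := by rw [hd]; linarith
    set t := (x - p n) / d with ht
    have ht0 : 0 ≤ t := div_nonneg (by linarith [hx.1]) hd0.le
    have ht1 : t ≤ 1 := by rw [ht, div_le_one hd0]; linarith [hx.2]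
    have hleft : p n ∈ Set.Icc (p n) (p (n+1)) := ⟨le_refl _, hlt.le⟩
    have hright : p (n+1) ∈ Set.Icc (p n) (p (n+1)) := ⟨hlt.le, le_refl _⟩
    have h1 : γ x = γ (p n) + (x - p n) • v n := by
      have h := hv n (p n) hleft x hx
      rw [← h]; abel
    have h2 : γ (p (n+1)) = γ (p n) + d • v n := by
      have h := hv n (p n) hleft (p (n+1)) hright
      rw [hd, ← h]; abel
    have htd : t * d = x - p n := by rw [ht]; field_simp
    refine ⟨1 - t, t, by linarith, ht0, by ring, ?_⟩
    rw [h1, h2, ← htd]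
    module
  -- upper Lipschitz
  have hsingle : ∀ n : ℤ, ∀ x ∈ Set.Icc (p n) (p (n+1)), ∀ y ∈ Set.Icc (p n) (p (n+1)),
      dist (γ x) (γ y) ≤ C * |y - x| := by
    intro n x hx y hy
    rw [hdist n x hx y hy, mul_comm]
    exact mul_le_mul_of_nonneg_right (hv2 n) (abs_nonneg _)
  have hupk : ∀ k : ℕ, ∀ n : ℤ, ∀ x y : ℝ, p n ≤ x → x ≤ y → y ≤ p (n + (k:ℤ)) →
      dist (γ x) (γ y) ≤ C * (y - x) := by
    intro k
    induction k with
    | zero =>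
      intro n x y h1 h2 h3
      rw [show (n + ((0:ℕ):ℤ)) = n by simp] at h3
      have hxy : x = y := le_antisymm h2 (le_trans h3 h1)
      rw [hxy]
      simp
    | succ k ih =>
      intro n x y h1 h2 h3
      rw [show (n + (((k:ℕ)+1 : ℕ):ℤ)) = (n + (k:ℤ)) + 1 by push_cast; ring] at h3
      have hlt : p (n + (k:ℤ)) < p ((n + (k:ℤ)) + 1) := hp (by omega)
      by_cases hy : y ≤ p (n + (k:ℤ))
      · exact ih n x y h1 h2 hy
      · push_neg at hy
        by_cases hxk : x ≤ p (n + (k:ℤ))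
        · have e1 := ih n x (p (n + (k:ℤ))) h1 hxk (le_refl _)
          have e2 : dist (γ (p (n + (k:ℤ)))) (γ y) ≤ C * (y - p (n + (k:ℤ))) := by
            have h := hsingle (n + (k:ℤ)) (p (n + (k:ℤ))) ⟨le_refl _, hlt.le⟩ y ⟨hy.le, h3⟩
            rwa [abs_of_nonneg (by linarith)] at h
          calc dist (γ x) (γ y) ≤ dist (γ x) (γ (p (n + (k:ℤ)))) + dist (γ (p (n + (k:ℤ)))) (γ y) :=
                dist_triangle _ _ _
            _ ≤ C * (p (n + (k:ℤ)) - x) + C * (y - p (n + (k:ℤ))) := by linarith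
            _ = C * (y - x) := by ring
        · push_neg at hxk
          have h := hsingle (n + (k:ℤ)) x ⟨hxk.le, by linarith⟩ y ⟨by linarith, h3⟩
          rwa [abs_of_nonneg (by linarith)] at h
  have hupper : ∀ x y : ℝ, x ≤ y → dist (γ x) (γ y) ≤ C * (y - x) := by
    intro x y hxy
    obtain ⟨n, hn1, hn2⟩ := hfloor x
    obtain ⟨m, hm1, hm2⟩ := hfloor y
    have hnm : n ≤ m := by
      by_contra h
      push_neg at h
      have : p (m+1) ≤ p n := hp.monotone (by omega)
      linarith
    have htn : (((m + 1 - n).toNat : ℤ)) = m + 1 - n := Int.toNat_of_nonneg (by omega)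
    refine hupk (m + 1 - n).toNat n x y hn1 hxy ?_
    rw [show n + (((m + 1 - n).toNat : ℕ):ℤ) = m + 1 by rw [htn]; ring]
    exact hm2.le
  -- lower bilipschitz bound
  have hlower : ∀ x y : ℝ, x ≤ y → (1/L) * (y - x) ≤ dist (γ x) (γ y) := by
    intro x y hxy
    by_cases hfc : C ≤ y - x
    · have h1 := hfar x y (by rw [abs_of_nonneg (by linarith)]; exact hfc)
      rw [abs_of_nonneg (by linarith)] at h1
      have h2 : (1/L) * (y - x) ≤ (1/C) * (y - x) :=
        mul_le_mul_of_nonneg_right hinvL (by linarith)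
      linarith
    · push_neg at hfc
      obtain ⟨n, hn1, hn2⟩ := hfloor x
      obtain ⟨m, hm1, hm2⟩ := hfloor y
      have hnm : n ≤ m := by
        by_contra h
        push_neg at h
        have : p (m+1) ≤ p n := hp.monotone (by omega)
        linarith
      have hxIcc : x ∈ Set.Icc (p n) (p (n+1)) := ⟨hn1, hn2.le⟩
      have hyIcc : y ∈ Set.Icc (p m) (p (m+1)) := ⟨hm1, hm2.le⟩
      by_cases hsame : y ≤ p (n+1)
      · -- same interval
        have hy' : y ∈ Set.Icc (p n) (p (n+1)) := ⟨le_trans hn1 hxy, hsame⟩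
        rw [hdist n x hxIcc y hy', abs_of_nonneg (by linarith)]
        have h1 : (1/C) * (y - x) ≤ (y - x) * ‖v n‖ := by
          rw [mul_comm (1/C) (y - x)]
          exact mul_le_mul_of_nonneg_left (hv1 n) (by linarith)
        have h2 : (1/L) * (y - x) ≤ (1/C) * (y - x) :=
          mul_le_mul_of_nonneg_right hinvL (by linarith)
        linarith
      · push_neg at hsame
        have hmn1 : n < m := by
          by_contra h
          push_neg at h
          have : p (m+1) ≤ p (n+1) := hp.monotone (by omega)
          linarith
        by_cases hadj : m = n + 1
        · -- adjacent intervals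
          subst hadj
          have hpn : p n < p (n+1) := hp (by omega)
          have hpn1 : p (n+1) < p (n+1+1) := hp (by omega)
          have hmem1 : p (n+1) ∈ Set.Icc (p n) (p (n+1)) := ⟨hpn.le, le_refl _⟩
          have hmem0 : p n ∈ Set.Icc (p n) (p (n+1)) := ⟨le_refl _, hpn.le⟩
          have hmem1' : p (n+1) ∈ Set.Icc (p (n+1)) (p (n+1+1)) := ⟨le_refl _, hpn1.le⟩
          have hmem2 : p (n+1+1) ∈ Set.Icc (p (n+1)) (p (n+1+1)) := ⟨hpn1.le, le_refl _⟩
          have he1 : (0:ℝ) < p (n+1) - x := by linarith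
          have he2 : (0:ℝ) < y - p (n+1) := by linarith
          set D1 := dist (γ x) (γ (p (n+1))) with hD1def
          set D2 := dist (γ y) (γ (p (n+1))) with hD2def
          have hd1 : D1 = (p (n+1) - x) * ‖v n‖ := by
            rw [hD1def, hdist n x hxIcc (p (n+1)) hmem1, abs_of_pos he1]
          have hd2 : D2 = (y - p (n+1)) * ‖v (n+1)‖ := by
            rw [hD2def, dist_comm, hdist (n+1) (p (n+1)) hmem1' y hyIcc, abs_of_pos he2]
          have hD1lb : (p (n+1) - x) * (1/C) ≤ D1 := by
            rw [hd1]; exact mul_le_mul_of_nonneg_left (hv1 n) he1.le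
          have hD2lb : (y - p (n+1)) * (1/C) ≤ D2 := by
            rw [hd2]; exact mul_le_mul_of_nonneg_left (hv1 (n+1)) he2.le
          have hD1pos : 0 < D1 := lt_of_lt_of_le (by positivity) hD1lb
          have hD2pos : 0 < D2 := lt_of_lt_of_le (by positivity) hD2lb
          -- angle equality
          have hvx : γ x - γ (p (n+1)) =
              ((p (n+1) - x)/(p (n+1) - p n)) • (γ (p n) - γ (p (n+1))) := by
            have e1 := hv n (p (n+1)) hmem1 x hxIcc
            have e2 := hv n (p (n+1)) hmem1 (p n) hmem0
            have hc : (p (n+1) - x)/(p (n+1) - p n) * (p n - p (n+1)) = x - p (n+1) := by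
              have hne : p (n+1) - p n ≠ 0 := by linarith
              field_simp
              ring
            rw [e1, e2, smul_smul, hc]
          have hvy : γ y - γ (p (n+1)) =
              ((y - p (n+1))/(p (n+1+1) - p (n+1))) • (γ (p (n+1+1)) - γ (p (n+1))) := by
            have e1 := hv (n+1) (p (n+1)) hmem1' y hyIcc
            have e2 := hv (n+1) (p (n+1)) hmem1' (p (n+1+1)) hmem2
            have hc : (y - p (n+1))/(p (n+1+1) - p (n+1)) * (p (n+1+1) - p (n+1))
                = y - p (n+1) := by
              have hne : p (n+1+1) - p (n+1) ≠ 0 := by linarith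
              field_simp
            rw [e1, e2, smul_smul, hc]
          have hang : EuclideanGeometry.angle (γ x) (γ (p (n+1))) (γ y)
              = EuclideanGeometry.angle (γ (p n)) (γ (p (n+1))) (γ (p (n+1+1))) := by
            unfold EuclideanGeometry.angle
            simp only [vsub_eq_sub]
            rw [hvx, hvy,
              InnerProductGeometry.angle_smul_left_of_pos _ _
                (div_pos he1 (by linarith)),
              InnerProductGeometry.angle_smul_right_of_pos _ _
                (div_pos he2 (by linarith))]
          have hαθ : α ≤ EuclideanGeometry.angle (γ x) (γ (p (n+1))) (γ y) := by
            rw [hang]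
            have h := hangle (n+1)
            rwa [show (n+1-1 : ℤ) = n by ring] at h
          have hcosθ : Real.cos (EuclideanGeometry.angle (γ x) (γ (p (n+1))) (γ y))
              ≤ Real.cos α :=
            Real.cos_le_cos_of_nonneg_of_le_pi hα0.le
              (EuclideanGeometry.angle_le_pi _ _ _) hαθ
          have hlaw := EuclideanGeometry.law_cos (γ x) (γ (p (n+1))) (γ y)
          have hlaw' : dist (γ x) (γ y)^2 = D1^2 + D2^2 -
              2*D1*D2*Real.cos (EuclideanGeometry.angle (γ x) (γ (p (n+1))) (γ y)) := by
            rw [hD1def, hD2def]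
            linear_combination hlaw
          -- hlaw : dist (γ x) (γ y)^2 = D1^2 + D2^2 - 2*D1*D2*cos θ
          have h1L : (1/L)^2 = (1 - Real.cos α) / (16 * C^4) := by
            rw [← hssq, hLdef]
            field_simp
            ring
          have hsum : (y - x) * (1/C) ≤ D1 + D2 := by
            have : (y - x) * (1/C) = (p (n+1) - x) * (1/C) + (y - p (n+1)) * (1/C) := by ring
            linarith
          have hA : ((y - x) * (1/C))^2 ≤ (D1 + D2)^2 :=
            pow_le_pow_left₀ (mul_nonneg (by linarith) (by positivity)) hsum 2
          have hB : (1 - Real.cos α)/2 * (D1 + D2)^2 ≤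
              D1^2 + D2^2 - 2*D1*D2*Real.cos (EuclideanGeometry.angle (γ x) (γ (p (n+1))) (γ y)) := by
            have hq := quad_aux D1 D2 (Real.cos α) hD1pos.le hD2pos.le
              (Real.neg_one_le_cos α) (Real.cos_le_one α)
            have hmono : 2*D1*D2*Real.cos (EuclideanGeometry.angle (γ x) (γ (p (n+1))) (γ y))
                ≤ 2*D1*D2*Real.cos α :=
              mul_le_mul_of_nonneg_left hcosθ
                (mul_nonneg (mul_nonneg (by norm_num) hD1pos.le) hD2pos.le)
            linarith
          have hsq : ((1/L) * (y - x))^2 ≤ dist (γ x) (γ y)^2 := by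
            rw [hlaw']
            calc ((1/L) * (y - x))^2 = (1/L)^2 * (y - x)^2 := by ring
              _ = (1 - Real.cos α) * (y - x)^2 / (16 * C^4) := by rw [h1L]; ring
              _ ≤ (1 - Real.cos α) * (y - x)^2 / (2 * C^2) := by
                  exact div_le_div_of_nonneg_left
                    (mul_nonneg (by linarith) (sq_nonneg _)) (by positivity) hC24
              _ = (1 - Real.cos α)/2 * ((y - x) * (1/C))^2 := by
                  field_simp
              _ ≤ (1 - Real.cos α)/2 * (D1 + D2)^2 :=
                  mul_le_mul_of_nonneg_left hA (by linarith)
              _ ≤ _ := hB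
          have hfin := Real.sqrt_le_sqrt hsq
          rw [Real.sqrt_sq_eq_abs, Real.sqrt_sq_eq_abs] at hfin
          calc (1/L) * (y - x) ≤ |(1/L) * (y - x)| := le_abs_self _
            _ ≤ |dist (γ x) (γ y)| := hfin
            _ = dist (γ x) (γ y) := abs_of_nonneg dist_nonneg
        · -- far apart intervals
          have hge2 : n + 2 ≤ m := by omega
          have habs : (2:ℤ) ≤ |(n+1) - (m+1)| := by
            rw [show (n+1) - (m+1) = -(m - n) by ring, abs_neg,
              abs_of_nonneg (by omega)]
            omega
          have hxs : γ x ∈ segment ℝ (γ (p (n+1-1))) (γ (p (n+1))) := by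
            rw [show (n+1-1 : ℤ) = n by ring]
            exact hseg n x hxIcc
          have hys : γ y ∈ segment ℝ (γ (p (m+1-1))) (γ (p (m+1))) := by
            rw [show (m+1-1 : ℤ) = m by ring]
            exact hseg m y hyIcc
          have hb := hbuffer (n+1) (m+1) habs (γ x) hxs (γ y) hys
          have h1 : (1/L) * (y - x) ≤ (1/L) * C :=
            mul_le_mul_of_nonneg_left hfc.le (by positivity)
          have h2 : (1/L) * C ≤ 1/C := by
            rw [div_mul_eq_mul_div, one_mul, div_le_div_iff₀ hL0 hC0, one_mul, ← pow_two]
            exact hLC2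
          linarith
  -- assemble
  intro x _ y _
  have hmain : ∀ x y : ℝ, x ≤ y →
      (1/L) * dist x y ≤ dist (γ x) (γ y) ∧ dist (γ x) (γ y) ≤ L * dist x y := by
    intro x y hxy
    rw [Real.dist_eq, abs_sub_comm, abs_of_nonneg (by linarith)]
    refine ⟨hlower x y hxy, ?_⟩
    exact le_trans (hupper x y hxy) (mul_le_mul_of_nonneg_right hLC (by linarith))
  rcases le_total x y with h | h
  · exact hmain x y h
  · have h2 := hmain y x h
    rw [dist_comm x y, dist_comm (γ x) (γ y)]
    exact h2

end
end

section
/- Let P ⊆ ℝ² be a trapezium of height h, with parallel sides (bases) of lengths b₁ and b₂ where b₁ ≤ b₂, and with non-parallel sides (legs) of lengths l₁ ≤ l₂. Then there exists a bilipschitz bijection T : [0,1]² → P with Lip(T) ≤ b₂ + l₂ and Lip(T⁻¹) ≤ √(b₂² + (3/2)·l₂²)/(b₁·h). -/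
/-!
The parameterisation is the bilinear interpolation `T` of the vertices. For a trapezium with
`v₃ - v₄ = c • (v₂ - v₁)` it reads `T(s, t) = v₁ + s (1 + t (c - 1)) • (v₂ - v₁) + t • (v₄ - v₁)`,
so in an orthonormal frame along and across the bases, `T x - T y = M (x - y)` exactly, with
`M = [[A, B], [0, H]]` upper triangular: `A ∈ [b₁, b₂]` is the width of the trapezium at height
`y₁`, `(B, H)` is the segment joining the bases at parameter `x₀` (a convex combination of the
legs, hence of length `≤ l₂`), and `H ≥ h` is the height. Hence `‖M‖ ≤ b₂ + l₂`, and the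
Frobenius norm of `M⁻¹` gives `‖M⁻¹‖ ≤ √(b₁² + l₂²) / (b₁ h)`. Surjectivity holds because the
image of the square is the affine image of the convex region `0 ≤ t ≤ 1, 0 ≤ a ≤ 1 + t (c - 1)`.
-/

noncomputable section

def unitSquare : Set (EuclideanSpace ℝ (Fin 2)) :=
  {x | x 0 ∈ Set.Icc (0 : ℝ) 1 ∧ x 1 ∈ Set.Icc (0 : ℝ) 1}

open scoped RealInnerProductSpace

lemma dist_sq_eq_fin_two (x y : EuclideanSpace ℝ (Fin 2)) :
    dist x y ^ 2 = (x 0 - y 0) ^ 2 + (x 1 - y 1) ^ 2 := by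
  simp [EuclideanSpace.dist_sq_eq, Fin.sum_univ_two, Real.dist_eq, sq_abs]

lemma triangular_form_le {A B H a l : ℝ} (hA : A ^ 2 ≤ a ^ 2) (hB : B ^ 2 + H ^ 2 ≤ l ^ 2)
    (ha : 0 ≤ a) (hl : 0 ≤ l) (s t : ℝ) :
    (A * s + B * t) ^ 2 + (H * t) ^ 2 ≤ (a + l) ^ 2 * (s ^ 2 + t ^ 2) := by
  nlinarith [sq_nonneg (A * t - B * s),
    mul_nonneg (mul_nonneg ha hl) (add_nonneg (sq_nonneg s) (sq_nonneg t)),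
    mul_nonneg (sub_nonneg.mpr hA) (sq_nonneg s),
    mul_nonneg (sub_nonneg.mpr hA) (sq_nonneg t),
    mul_nonneg (sub_nonneg.mpr hB) (add_nonneg (sq_nonneg s) (sq_nonneg t)),
    mul_nonneg (sq_nonneg H) (sq_nonneg s)]

/-- For `M = [[A, B], [0, H]]` this is `‖M⁻¹‖ ≤ √(a² + l²) / (a H)`, read off the Frobenius norm
`√(A² + B² + H²) / (A H)` of `M⁻¹`. -/
lemma le_triangular_form {A B H a l : ℝ} (ha : 0 ≤ a) (hA : a ≤ A) (hB : B ^ 2 + H ^ 2 ≤ l ^ 2)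
    (s t : ℝ) :
    (a * H) ^ 2 * (s ^ 2 + t ^ 2) ≤ (a ^ 2 + l ^ 2) * ((A * s + B * t) ^ 2 + (H * t) ^ 2) := by
  have hA2 : a ^ 2 ≤ A ^ 2 := pow_le_pow_left₀ ha hA 2
  have h1 : (H * A * s) ^ 2 ≤ l ^ 2 * ((A * s + B * t) ^ 2 + (H * t) ^ 2) := by
    nlinarith [sq_nonneg (H * (H * t) + B * (A * s + B * t)),
      mul_nonneg (sub_nonneg.mpr hB)
        (add_nonneg (sq_nonneg (A * s + B * t)) (sq_nonneg (H * t)))]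
  nlinarith [mul_nonneg (mul_nonneg (sq_nonneg H) (sq_nonneg s)) (sub_nonneg.mpr hA2),
    mul_nonneg (sq_nonneg a) (sq_nonneg (A * s + B * t))]

section InnerProductSpace

variable {E : Type*} [NormedAddCommGroup E] [InnerProductSpace ℝ E]

lemma exists_inner_sub_smul_eq_zero (u w : E) : ∃ r : ℝ, ⟪w - r • u, u⟫ = 0 := by
  refine ⟨⟪w, u⟫ / ‖u‖ ^ 2, ?_⟩
  rcases eq_or_ne u 0 with rfl | hu
  · simp
  rw [inner_sub_left, real_inner_smul_left, real_inner_self_eq_norm_sq]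
  field_simp
  ring

lemma norm_smul_add_smul_sq_of_inner_eq_zero {u w : E} {r : ℝ} (hr : ⟪w - r • u, u⟫ = 0)
    (a b : ℝ) :
    ‖a • u + b • w‖ ^ 2 = ((a + b * r) * ‖u‖) ^ 2 + (b * ‖w - r • u‖) ^ 2 := by
  have hd : a • u + b • w = (a + b * r) • u + b • (w - r • u) := by module
  rw [hd, norm_add_sq_real, real_inner_smul_left, real_inner_smul_right,
    real_inner_comm, hr]
  simp [norm_smul, mul_pow, sq_abs]

end InnerProductSpace

def bilinearPatch {E : Type*} [AddCommGroup E] [Module ℝ E] (p₁ p₂ p₃ p₄ : E)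
    (x : EuclideanSpace ℝ (Fin 2)) : E :=
  (1 - x 1) • ((1 - x 0) • p₁ + x 0 • p₂) + x 1 • ((1 - x 0) • p₄ + x 0 • p₃)

section VectorSpace

variable {E : Type*} [AddCommGroup E] [Module ℝ E] {p₁ p₂ p₃ p₄ : E} {c : ℝ}

lemma bilinearPatch_mapsTo_convexHull :
    Set.MapsTo (bilinearPatch p₁ p₂ p₃ p₄) unitSquare (convexHull ℝ {p₁, p₂, p₃, p₄}) := by
  rintro x ⟨⟨hs₀, hs₁⟩, ⟨ht₀, ht₁⟩⟩
  have hconv := convex_convexHull ℝ ({p₁, p₂, p₃, p₄} : Set E)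
  have hv : ∀ p ∈ ({p₁, p₂, p₃, p₄} : Set E), p ∈ convexHull ℝ {p₁, p₂, p₃, p₄} :=
    fun p hp => subset_convexHull ℝ _ hp
  refine hconv (hconv (hv p₁ (by simp)) (hv p₂ (by simp)) ?_ hs₀ (by ring))
    (hconv (hv p₄ (by simp)) (hv p₃ (by simp)) ?_ hs₀ (by ring)) ?_ ht₀ (by ring) <;> linarith

lemma bilinearPatch_of_parallel (hpar : p₃ - p₄ = c • (p₂ - p₁)) (x : EuclideanSpace ℝ (Fin 2)) :
    bilinearPatch p₁ p₂ p₃ p₄ x =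
      p₁ + (x 0 * (1 + x 1 * (c - 1))) • (p₂ - p₁) + x 1 • (p₄ - p₁) := by
  rw [bilinearPatch, eq_add_of_sub_eq hpar]
  module

lemma convexHull_subset_image_bilinearPatch (hpar : p₃ - p₄ = c • (p₂ - p₁)) (hc : 0 < c) :
    convexHull ℝ {p₁, p₂, p₃, p₄} ⊆ bilinearPatch p₁ p₂ p₃ p₄ '' unitSquare := by
  let Φ : ℝ × ℝ →ᵃ[ℝ] E :=
    ((LinearMap.fst ℝ ℝ ℝ).smulRight (p₂ - p₁) +
        (LinearMap.snd ℝ ℝ ℝ).smulRight (p₄ - p₁)).toAffineMap +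
      AffineMap.const ℝ (ℝ × ℝ) p₁
  have hΦ : ∀ z, Φ z = p₁ + z.1 • (p₂ - p₁) + z.2 • (p₄ - p₁) := fun z => by
    simp [Φ]; abel
  let S : Set (ℝ × ℝ) := {z | 0 ≤ z.2 ∧ z.2 ≤ 1 ∧ 0 ≤ z.1 ∧ z.1 ≤ 1 + z.2 * (c - 1)}
  have hS : Convex ℝ S := by
    rintro z ⟨h₁, h₂, h₃, h₄⟩ z' ⟨h₁', h₂', h₃', h₄'⟩ a b ha hb hab
    simp only [S, Set.mem_ofPred_eq, Prod.fst_add, Prod.snd_add, Prod.smul_fst, Prod.smul_snd,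
      smul_eq_mul]
    refine ⟨by positivity, ?_, by positivity, ?_⟩ <;>
      nlinarith [mul_le_mul_of_nonneg_left h₂ ha, mul_le_mul_of_nonneg_left h₂' hb,
        mul_le_mul_of_nonneg_left h₄ ha, mul_le_mul_of_nonneg_left h₄' hb]
  have hΦS : Φ '' S ⊆ bilinearPatch p₁ p₂ p₃ p₄ '' unitSquare := by
    rintro _ ⟨⟨a, t⟩, ⟨ht₀, ht₁, ha₀, ha₁⟩, rfl⟩
    dsimp only at ht₀ ht₁ ha₀ ha₁
    have hw : 0 < 1 + t * (c - 1) := by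
      rcases ht₁.lt_or_eq with ht₁ | rfl
      · nlinarith [mul_nonneg ht₀ hc.le]
      · linarith
    refine ⟨!₂[a / (1 + t * (c - 1)), t], ⟨⟨by simp; positivity, by simpa [div_le_one hw]⟩,
      by simp [ht₀, ht₁]⟩, ?_⟩
    simp [bilinearPatch_of_parallel hpar, hΦ, div_mul_cancel₀ _ hw.ne']
  refine (convexHull_min ?_ (hS.affine_image Φ)).trans hΦS
  rintro p (rfl | rfl | rfl | rfl)
  · exact ⟨(0, 0), by simp [S], by simp [hΦ]⟩
  · exact ⟨(1, 0), by simp [S], by simp [hΦ]⟩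
  · exact ⟨(c, 1), by simp [S, hc.le], by simp [hΦ, eq_add_of_sub_eq hpar]; abel⟩
  · exact ⟨(0, 1), by simp [S, hc.le], by simp [hΦ]⟩

end VectorSpace

lemma infDist_affineSpan_pair_le {E : Type*} [NormedAddCommGroup E] [NormedSpace ℝ E]
    (p₁ p₂ q : E) (r : ℝ) :
    Metric.infDist q (line[ℝ, p₁, p₂] : Set E) ≤ ‖q - p₁ - r • (p₂ - p₁)‖ := by
  refine (Metric.infDist_le_dist_of_mem (smul_vsub_vadd_mem_affineSpan_pair r p₁ p₂)).trans_eq ?_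
  rw [dist_eq_norm, vsub_eq_sub, vadd_eq_add, sub_add_eq_sub_sub_swap]

section Trapezium

variable {E : Type*} [NormedAddCommGroup E] [InnerProductSpace ℝ E] {p₁ p₂ p₃ p₄ : E} {c r l : ℝ}

lemma dist_eq_mul_of_parallel (hpar : p₃ - p₄ = c • (p₂ - p₁)) (hc : 0 ≤ c) :
    dist p₄ p₃ = c * dist p₁ p₂ := by
  rw [dist_eq_norm', dist_eq_norm', hpar, norm_smul, Real.norm_of_nonneg hc]

lemma dist_bilinearPatch_sq (hpar : p₃ - p₄ = c • (p₂ - p₁))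
    (hr : ⟪p₄ - p₁ - r • (p₂ - p₁), p₂ - p₁⟫ = 0) (x y : EuclideanSpace ℝ (Fin 2)) :
    dist (bilinearPatch p₁ p₂ p₃ p₄ x) (bilinearPatch p₁ p₂ p₃ p₄ y) ^ 2 =
      ((1 + y 1 * (c - 1)) * ‖p₂ - p₁‖ * (x 0 - y 0) +
          (r + x 0 * (c - 1)) * ‖p₂ - p₁‖ * (x 1 - y 1)) ^ 2 +
        (‖p₄ - p₁ - r • (p₂ - p₁)‖ * (x 1 - y 1)) ^ 2 := by
  have hdiff : bilinearPatch p₁ p₂ p₃ p₄ x - bilinearPatch p₁ p₂ p₃ p₄ y =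
      ((1 + y 1 * (c - 1)) * (x 0 - y 0) + x 0 * (c - 1) * (x 1 - y 1)) • (p₂ - p₁) +
        (x 1 - y 1) • (p₄ - p₁) := by
    rw [bilinearPatch_of_parallel hpar, bilinearPatch_of_parallel hpar]
    module
  rw [dist_eq_norm, hdiff, norm_smul_add_smul_sq_of_inner_eq_zero hr]
  ring

/-- The two quantities bounded here are the components, along and across the bases, of the
segment joining the points at parameter `s` on the two bases: a convex combination of the legs. -/
lemma sq_add_sq_le_of_legs_le (hpar : p₃ - p₄ = c • (p₂ - p₁))
    (hr : ⟪p₄ - p₁ - r • (p₂ - p₁), p₂ - p₁⟫ = 0) (h₁ : dist p₁ p₄ ≤ l) (h₂ : dist p₂ p₃ ≤ l)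
    {s : ℝ} (hs : s ∈ Set.Icc (0 : ℝ) 1) :
    ((r + s * (c - 1)) * ‖p₂ - p₁‖) ^ 2 + ‖p₄ - p₁ - r • (p₂ - p₁)‖ ^ 2 ≤ l ^ 2 := by
  have hfibre : (1 - s) • (p₄ - p₁) + s • (p₃ - p₂) ∈ Metric.closedBall (0 : E) l :=
    convex_closedBall 0 l (mem_closedBall_zero_iff.2 (dist_eq_norm' p₁ p₄ ▸ h₁))
      (mem_closedBall_zero_iff.2 (dist_eq_norm' p₂ p₃ ▸ h₂))
      (by linarith [hs.2]) hs.1 (by ring)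
  have heq : (1 - s) • (p₄ - p₁) + s • (p₃ - p₂) =
      (s * (c - 1)) • (p₂ - p₁) + (1 : ℝ) • (p₄ - p₁) := by
    rw [eq_add_of_sub_eq hpar]
    module
  rw [heq, mem_closedBall_zero_iff] at hfibre
  have := pow_le_pow_left₀ (norm_nonneg _) hfibre 2
  rw [norm_smul_add_smul_sq_of_inner_eq_zero hr] at this
  linarith

lemma dist_bilinearPatch_le (hpar : p₃ - p₄ = c • (p₂ - p₁)) (hc₀ : 0 ≤ c) (hc₁ : c ≤ 1)
    (h₁ : dist p₁ p₄ ≤ l) (h₂ : dist p₂ p₃ ≤ l) {x y : EuclideanSpace ℝ (Fin 2)}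
    (hx : x ∈ unitSquare) (hy : y ∈ unitSquare) :
    dist (bilinearPatch p₁ p₂ p₃ p₄ x) (bilinearPatch p₁ p₂ p₃ p₄ y) ≤
      (dist p₁ p₂ + l) * dist x y := by
  obtain ⟨r, hr⟩ := exists_inner_sub_smul_eq_zero (p₂ - p₁) (p₄ - p₁)
  have hl : 0 ≤ l := dist_nonneg.trans h₁
  have hA : ((1 + y 1 * (c - 1)) * ‖p₂ - p₁‖) ^ 2 ≤ ‖p₂ - p₁‖ ^ 2 := by
    rw [mul_pow]
    refine mul_le_of_le_one_left (sq_nonneg _) (pow_le_one₀ ?_ ?_) <;> nlinarith [hy.2.1, hy.2.2]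
  rw [← sq_le_sq₀ dist_nonneg (by positivity), mul_pow, dist_sq_eq_fin_two,
    dist_bilinearPatch_sq hpar hr, dist_eq_norm']
  exact triangular_form_le hA (sq_add_sq_le_of_legs_le hpar hr h₁ h₂ hx.1) (norm_nonneg _) hl _ _

lemma mul_dist_le_dist_bilinearPatch (hpar : p₃ - p₄ = c • (p₂ - p₁)) (hc₀ : 0 ≤ c) (hc₁ : c ≤ 1)
    (h₁ : dist p₁ p₄ ≤ l) (h₂ : dist p₂ p₃ ≤ l) {h : ℝ} (hh₀ : 0 ≤ h)
    (hh : h ≤ Metric.infDist p₄ (line[ℝ, p₁, p₂] : Set E)) {x y : EuclideanSpace ℝ (Fin 2)}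
    (hx : x ∈ unitSquare) (hy : y ∈ unitSquare) :
    dist p₄ p₃ * h * dist x y ≤
      √(dist p₄ p₃ ^ 2 + l ^ 2) *
        dist (bilinearPatch p₁ p₂ p₃ p₄ x) (bilinearPatch p₁ p₂ p₃ p₄ y) := by
  obtain ⟨r, hr⟩ := exists_inner_sub_smul_eq_zero (p₂ - p₁) (p₄ - p₁)
  have hH := hh.trans (infDist_affineSpan_pair_le p₁ p₂ p₄ r)
  have hA : c * ‖p₂ - p₁‖ ≤ (1 + y 1 * (c - 1)) * ‖p₂ - p₁‖ := by
    gcongr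
    nlinarith [hy.2.1, hy.2.2]
  rw [← sq_le_sq₀ (by positivity) (by positivity), mul_pow, mul_pow (√_),
    Real.sq_sqrt (by positivity), dist_sq_eq_fin_two, dist_bilinearPatch_sq hpar hr, dist_eq_mul_of_parallel hpar hc₀,
    dist_eq_norm']
  calc (c * ‖p₂ - p₁‖ * h) ^ 2 * ((x 0 - y 0) ^ 2 + (x 1 - y 1) ^ 2)
      ≤ (c * ‖p₂ - p₁‖ * ‖p₄ - p₁ - r • (p₂ - p₁)‖) ^ 2 *
          ((x 0 - y 0) ^ 2 + (x 1 - y 1) ^ 2) := by gcongr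
    _ ≤ _ := le_triangular_form (by positivity) hA (sq_add_sq_le_of_legs_le hpar hr h₁ h₂ hx.1) _ _

end Trapezium

/-- A trapezium with vertices `v₁ v₂ v₃ v₄` (in this cyclic order), bases
`[v₁, v₂]` and `[v₄, v₃]` of lengths `b₂ ≥ b₁`, legs `[v₂, v₃]` and `[v₄, v₁]`
of lengths `l₁ ≤ l₂`, and height `h`, admits a bilipschitz parameterisation by the unit
square with `Lip(T) ≤ b₂ + l₂` and `Lip(T⁻¹) ≤ √(b₂² + (3/2)l₂²)/(b₁·h)`. -/
theorem stmt9 (v₁ v₂ v₃ v₄ : EuclideanSpace ℝ (Fin 2))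
    (b₁ b₂ l₁ l₂ h c : ℝ) (hc : 0 < c)
    (hpar : v₃ - v₄ = c • (v₂ - v₁))
    (hb₂ : dist v₁ v₂ = b₂) (hb₁ : dist v₄ v₃ = b₁)
    (hb : b₁ ≤ b₂) (hb₁pos : 0 < b₁)
    (hl₁ : dist v₂ v₃ = l₁) (hl₂ : dist v₁ v₄ = l₂) (hl : l₁ ≤ l₂)
    (hh : Metric.infDist v₄ ((affineSpan ℝ ({v₁, v₂} : Set (EuclideanSpace ℝ (Fin 2)))) :
      Set (EuclideanSpace ℝ (Fin 2))) = h)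
    (hhpos : 0 < h) :
    ∃ T : EuclideanSpace ℝ (Fin 2) → EuclideanSpace ℝ (Fin 2),
      Set.BijOn T unitSquare (convexHull ℝ {v₁, v₂, v₃, v₄}) ∧
      (∀ x ∈ unitSquare, ∀ y ∈ unitSquare,
        dist (T x) (T y) ≤ (b₂ + l₂) * dist x y) ∧
      (∀ x ∈ unitSquare, ∀ y ∈ unitSquare,
        dist x y ≤ (Real.sqrt (b₂ ^ 2 + (3 / 2) * l₂ ^ 2) / (b₁ * h)) * dist (T x) (T y)) := by
  have hb₁c : b₁ = c * b₂ := by rw [← hb₁, ← hb₂, dist_eq_mul_of_parallel hpar hc.le]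
  have hc₁ : c ≤ 1 := by nlinarith
  have hl₁₂ : dist v₂ v₃ ≤ l₂ := hl₁ ▸ hl
  have hinv : ∀ x ∈ unitSquare, ∀ y ∈ unitSquare, dist x y ≤
      (Real.sqrt (b₂ ^ 2 + (3 / 2) * l₂ ^ 2) / (b₁ * h)) *
        dist (bilinearPatch v₁ v₂ v₃ v₄ x) (bilinearPatch v₁ v₂ v₃ v₄ y) := by
    intro x hx y hy
    have key := mul_dist_le_dist_bilinearPatch hpar hc.le hc₁ hl₂.le hl₁₂ hhpos.le hh.ge hx hy
    have hK : √(b₁ ^ 2 + l₂ ^ 2) ≤ √(b₂ ^ 2 + (3 / 2) * l₂ ^ 2) :=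
      Real.sqrt_le_sqrt (by nlinarith [sq_nonneg l₂])
    rw [hb₁] at key
    rw [div_mul_eq_mul_div, le_div_iff₀ (by positivity)]
    calc dist x y * (b₁ * h) = b₁ * h * dist x y := by ring
      _ ≤ _ := key
      _ ≤ _ := by gcongr
  refine ⟨bilinearPatch v₁ v₂ v₃ v₄, ⟨bilinearPatch_mapsTo_convexHull, fun x hx y hy hxy => ?_,
    convexHull_subset_image_bilinearPatch hpar hc⟩, fun x hx y hy => ?_, hinv⟩
  · simpa [hxy] using hinv x hx y hy
  · simpa only [hb₂] using dist_bilinearPatch_le hpar hc.le hc₁ hl₂.le hl₁₂ hx hy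

end
end

section
/- Let K ⊆ ℝ² be a compact convex set, and let w, p ∈ K with w ≠ p be such that the open line segment (w, p) lies in the interior of K. Let A_{wp} = {a ∈ ℝ² \ (int K ∪ {p}) : ‖a − p‖ ≤ ‖a − w‖}. Then the function a ↦ γ(w, p, a), restricted to A_{wp}, attains its minimum at a point lying in the intersection of the boundary ∂K with the perpendicular bisector of the segment [w, p]. -/
noncomputable section

open EuclideanGeometry

/-!
The angle `∠ w p a` is constant along rays from `p`, and on the perpendicular bisector `L` of
`[w, p]` it increases with the distance to `p`: at `x ∈ L` its cosine is
`dist w p / (2 * dist x p)`.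
If `a ∈ A_{wp}` makes an acute angle, its ray from `p` meets `L` at a point `ℓ` beyond `a`, which
stays outside `int K` by convexity. The segment from the midpoint of `[w, p]` (an interior point)
to `ℓ` lies in `L` and crosses `∂K` at a point no farther from `p` than `ℓ`, so some point of
the compact set `∂K ∩ L` does at least as well as `a`. Every point of `L` beats an obtuse angle,
and `∂K ∩ L` is nonempty because `L` is unbounded while `K` is bounded.
-/

open AffineSubspace Module Set
open scoped RealInnerProductSpace

theorem IsPreconnected.inter_frontier_nonempty_of_mem_interior {X : Type*} [TopologicalSpace X]
    {s t : Set X} (hs : IsPreconnected s) {x y : X} (hx : x ∈ s) (hxt : x ∈ interior t)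
    (hy : y ∈ s) (hyt : y ∉ interior t) : (s ∩ frontier t).Nonempty := by
  by_contra h
  have hcover : s ⊆ interior t ∪ (closure t)ᶜ := fun z hz => by
    by_cases hzt : z ∈ interior t
    · exact Or.inl hzt
    · exact Or.inr fun hzc => h ⟨z, hz, hzc, hzt⟩
  obtain ⟨z, -, hzi, hzc⟩ := hs _ _ isOpen_interior isClosed_closure.isOpen_compl hcover
    ⟨x, hx, hxt⟩ ⟨y, hy, (hcover hy).resolve_left hyt⟩
  exact hzc (interior_subset_closure hzi)

theorem Convex.add_smul_notMem_interior {𝕜 E : Type*} [Field 𝕜] [LinearOrder 𝕜]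
    [IsStrictOrderedRing 𝕜] [AddCommGroup E] [Module 𝕜 E] [TopologicalSpace E]
    [IsTopologicalAddGroup E] [ContinuousConstSMul 𝕜 E] {s : Set E} (hs : Convex 𝕜 s)
    {x y : E} (hx : x ∈ s) (hy : x + y ∉ interior s) {t : 𝕜} (ht : 1 ≤ t) :
    x + t • y ∉ interior s := by
  intro hty
  have ht0 : 0 < t := zero_lt_one.trans_le ht
  apply hy
  simpa [smul_smul, inv_mul_cancel₀ ht0.ne'] using
    hs.add_smul_mem_interior hx hty ⟨inv_pos.2 ht0, inv_le_one_of_one_le₀ ht⟩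

section PerpBisector

variable {V P : Type*} [NormedAddCommGroup V] [InnerProductSpace ℝ V] [MetricSpace P]
  [NormedAddTorsor V P] {w p x y : P}

theorem AffineSubspace.isClosed_perpBisector (w p : P) : IsClosed (perpBisector w p : Set P) := by
  have : (perpBisector w p : Set P) = {c | dist c w = dist c p} :=
    Set.ext fun _ => mem_perpBisector_iff_dist_eq
  rw [this]
  exact isClosed_eq (by fun_prop) (by fun_prop)

theorem dist_midpoint_le_of_mem_perpBisector (hx : x ∈ perpBisector w p) :
    dist (midpoint ℝ w p) p ≤ dist x p := by
  have htri := dist_triangle w x p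
  rw [dist_comm w x, mem_perpBisector_iff_dist_eq.1 hx] at htri
  rw [dist_midpoint_right, Real.norm_two]
  linarith

theorem cos_angle_of_mem_perpBisector (hx : x ∈ perpBisector w p) :
    Real.cos (∠ w p x) = dist w p / (2 * dist x p) := by
  rw [perpBisector_comm, mem_perpBisector_iff_inner_eq, real_inner_comm] at hx
  rw [EuclideanGeometry.angle, InnerProductGeometry.cos_angle, hx, ← dist_eq_norm_vsub V,
    ← dist_eq_norm_vsub V, dist_comm p w]
  rcases eq_or_ne (dist w p) 0 with h | h
  · simp [h]
  · field_simp

theorem cos_angle_pos_of_mem_perpBisector (hwp : w ≠ p) (hx : x ∈ perpBisector w p) :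
    0 < Real.cos (∠ w p x) := by
  have hxp : x ≠ p := fun h => hwp (right_mem_perpBisector.1 (h ▸ hx))
  rw [cos_angle_of_mem_perpBisector hx]
  exact div_pos (dist_pos.2 hwp) (mul_pos two_pos (dist_pos.2 hxp))

theorem angle_le_angle_of_cos_le {p₁ p₂ p₃ p₄ p₅ p₆ : P}
    (h : Real.cos (∠ p₁ p₂ p₃) ≤ Real.cos (∠ p₄ p₅ p₆)) : ∠ p₄ p₅ p₆ ≤ ∠ p₁ p₂ p₃ :=
  (Real.strictAntiOn_cos.le_iff_ge ⟨angle_nonneg _ _ _, angle_le_pi _ _ _⟩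
    ⟨angle_nonneg _ _ _, angle_le_pi _ _ _⟩).1 h

theorem angle_le_angle_of_mem_perpBisector (hwp : w ≠ p) (hx : x ∈ perpBisector w p)
    (hy : y ∈ perpBisector w p) (hxy : dist x p ≤ dist y p) : ∠ w p x ≤ ∠ w p y := by
  apply angle_le_angle_of_cos_le
  have hxp : x ≠ p := fun h => hwp (right_mem_perpBisector.1 (h ▸ hx))
  rw [cos_angle_of_mem_perpBisector hx, cos_angle_of_mem_perpBisector hy]
  gcongr
  exact mul_pos two_pos (dist_pos.2 hxp)

theorem continuousAt_angle_right (hwp : w ≠ p) (hxp : x ≠ p) :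
    ContinuousAt (fun y => ∠ w p y) x :=
  (continuousAt_angle (x := (w, p, x)) hwp hxp).comp (f := fun y => (w, p, y)) (by fun_prop)

end PerpBisector

section InnerProductSpace

variable {V : Type*} [NormedAddCommGroup V] [InnerProductSpace ℝ V] {K : Set V} {w p a y : V}

theorem two_mul_inner_le_of_dist_le (h : dist a p ≤ dist a w) :
    2 * ⟪a - p, w - p⟫ ≤ dist w p ^ 2 := by
  have hexp : ‖a - w‖ ^ 2 = ‖a - p‖ ^ 2 - 2 * ⟪a - p, w - p⟫ + ‖w - p‖ ^ 2 := by
    rw [← norm_sub_sq_real, sub_sub_sub_cancel_right]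
  have hsq := pow_le_pow_left₀ dist_nonneg h 2
  rw [dist_eq_norm, dist_eq_norm] at hsq
  rw [dist_eq_norm]
  linarith

theorem exists_one_le_add_smul_mem_perpBisector (hpos : 0 < ⟪a - p, w - p⟫)
    (h : dist a p ≤ dist a w) : ∃ t : ℝ, 1 ≤ t ∧ p + t • (a - p) ∈ perpBisector w p := by
  refine ⟨dist w p ^ 2 / (2 * ⟪a - p, w - p⟫), ?_, ?_⟩
  · rw [one_le_div (by positivity)]
    exact two_mul_inner_le_of_dist_le h
  · rw [perpBisector_comm, mem_perpBisector_iff_inner_eq, vsub_eq_sub, vsub_eq_sub,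
      add_sub_cancel_left, real_inner_smul_left, dist_comm]
    field_simp

theorem exists_mem_perpBisector_notMem (hK : Bornology.IsBounded K) (hV : 1 < finrank ℝ V)
    (w p : V) : ∃ y ∈ perpBisector w p, y ∉ K := by
  obtain ⟨v, hv, hv0⟩ : ∃ v ∈ (perpBisector w p).direction, v ≠ 0 := by
    refine Submodule.exists_mem_ne_zero_of_ne_bot fun h => ?_
    rw [direction_perpBisector, Submodule.orthogonal_eq_bot_iff] at h
    have := finrank_span_le_card (R := ℝ) ({p -ᵥ w} : Set V)
    rw [h, finrank_top] at this
    simp only [toFinset_singleton, Finset.card_singleton] at this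
    omega
  obtain ⟨R, hR⟩ := hK.subset_closedBall (midpoint ℝ w p)
  refine ⟨((|R| + 1) / ‖v‖) • v +ᵥ midpoint ℝ w p,
    vadd_mem_of_mem_direction (Submodule.smul_mem _ _ hv) (midpoint_mem_perpBisector w p),
    fun hyK => ?_⟩
  have hdist := hR hyK
  rw [Metric.mem_closedBall, dist_vadd_left, norm_smul, Real.norm_eq_abs,
    abs_of_pos (by positivity), div_mul_cancel₀ _ (norm_ne_zero_iff.2 hv0)] at hdist
  linarith [le_abs_self R]

theorem exists_mem_frontier_inter_perpBisector_dist_le (hm : midpoint ℝ w p ∈ interior K)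
    (hy : y ∈ perpBisector w p) (hyK : y ∉ interior K) :
    ∃ b ∈ frontier K ∩ perpBisector w p, dist b p ≤ dist y p := by
  obtain ⟨b, hbseg, hbfr⟩ :=
    (convex_segment _ y).isPreconnected.inter_frontier_nonempty_of_mem_interior
      (left_mem_segment ℝ _ y) hm (right_mem_segment ℝ _ y) hyK
  have hsub : segment ℝ (midpoint ℝ w p) y ⊆ perpBisector w p :=
    (perpBisector w p).convex.segment_subset (midpoint_mem_perpBisector w p) hy
  have hball : segment ℝ (midpoint ℝ w p) y ⊆ Metric.closedBall p (dist y p) :=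
    (convex_closedBall p _).segment_subset
      (Metric.mem_closedBall.2 (dist_midpoint_le_of_mem_perpBisector hy))
      (Metric.mem_closedBall.2 le_rfl)
  exact ⟨b, ⟨hbfr, hsub hbseg⟩, hball hbseg⟩

theorem exists_mem_frontier_inter_perpBisector_angle_le (hK : Convex ℝ K) (hp : p ∈ K)
    (hwp : w ≠ p) (hm : midpoint ℝ w p ∈ interior K)
    (hB : (frontier K ∩ perpBisector w p).Nonempty)
    (ha : a ∉ interior K) (had : dist a p ≤ dist a w) :
    ∃ b ∈ frontier K ∩ perpBisector w p, ∠ w p b ≤ ∠ w p a := by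
  rcases le_or_gt ⟪a - p, w - p⟫ 0 with hneg | hpos
  · obtain ⟨b, hb⟩ := hB
    refine ⟨b, hb,
      angle_le_angle_of_cos_le (le_trans ?_ (cos_angle_pos_of_mem_perpBisector hwp hb.2).le)⟩
    rw [EuclideanGeometry.angle, InnerProductGeometry.cos_angle, real_inner_comm]
    exact div_nonpos_of_nonpos_of_nonneg hneg (by positivity)
  · obtain ⟨t, ht, hℓ⟩ := exists_one_le_add_smul_mem_perpBisector hpos had
    have hℓK : p + t • (a - p) ∉ interior K :=
      hK.add_smul_notMem_interior hp (by rwa [add_sub_cancel]) ht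
    obtain ⟨b, hb, hbℓ⟩ := exists_mem_frontier_inter_perpBisector_dist_le hm hℓ hℓK
    refine ⟨b, hb, ?_⟩
    calc ∠ w p b ≤ ∠ w p (p + t • (a - p)) :=
          angle_le_angle_of_mem_perpBisector hwp hb.2 hℓ hbℓ
      _ = ∠ w p a := angle_smul_right_of_pos w (r := t) (by linarith) (by simp)

end InnerProductSpace

theorem stmt10_general (K : Set (EuclideanSpace ℝ (Fin 2)))
    (hKcp : IsCompact K) (hKcv : Convex ℝ K)
    (w p : EuclideanSpace ℝ (Fin 2)) (hp : p ∈ K) (hwp : w ≠ p)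
    (hseg : openSegment ℝ w p ⊆ interior K) :
    ∃ a₀ ∈ {a : EuclideanSpace ℝ (Fin 2) |
        a ∉ interior K ∧ a ≠ p ∧ dist a p ≤ dist a w},
      a₀ ∈ frontier K ∧ dist a₀ w = dist a₀ p ∧
      ∀ a ∈ {a : EuclideanSpace ℝ (Fin 2) |
          a ∉ interior K ∧ a ≠ p ∧ dist a p ≤ dist a w},
        ∠ w p a₀ ≤ ∠ w p a := by
  set B := frontier K ∩ (perpBisector w p : Set (EuclideanSpace ℝ (Fin 2)))
  have hm : midpoint ℝ w p ∈ interior K := hseg (midpoint_mem_openSegment w p)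
  have hB : IsCompact B := hKcp.of_isClosed_subset
    (isClosed_frontier.inter (isClosed_perpBisector w p))
    fun x hx => hKcp.isClosed.frontier_subset hx.1
  have hBne : B.Nonempty := by
    obtain ⟨y, hy, hyK⟩ := exists_mem_perpBisector_notMem hKcp.isBounded (by simp) w p
    obtain ⟨b, hb, -⟩ :=
      exists_mem_frontier_inter_perpBisector_dist_le hm hy fun h => hyK (interior_subset h)
    exact ⟨b, hb⟩
  have hBp : ∀ x ∈ B, x ≠ p := fun x hx h => hwp (right_mem_perpBisector.1 (h ▸ hx.2))
  obtain ⟨a₀, ha₀, hmin⟩ := hB.exists_isMinOn hBne fun x hx =>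
    (continuousAt_angle_right hwp (hBp x hx)).continuousWithinAt
  have hdist := mem_perpBisector_iff_dist_eq.1 ha₀.2
  refine ⟨a₀, ⟨ha₀.1.2, hBp a₀ ha₀, hdist.ge⟩, ha₀.1, hdist, ?_⟩
  rintro a ⟨ha, -, had⟩
  obtain ⟨b, hb, hba⟩ :=
    exists_mem_frontier_inter_perpBisector_angle_le hKcv hp hwp hm hBne ha had
  exact (hmin hb).trans hba

theorem stmt10 (K : Set (EuclideanSpace ℝ (Fin 2)))
    (hKcp : IsCompact K) (hKcv : Convex ℝ K)
    (w p : EuclideanSpace ℝ (Fin 2)) (hw : w ∈ K) (hp : p ∈ K) (hwp : w ≠ p)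
    (hseg : openSegment ℝ w p ⊆ interior K) :
    ∃ a₀ ∈ {a : EuclideanSpace ℝ (Fin 2) |
        a ∉ interior K ∧ a ≠ p ∧ dist a p ≤ dist a w},
      a₀ ∈ frontier K ∧ dist a₀ w = dist a₀ p ∧
      ∀ a ∈ {a : EuclideanSpace ℝ (Fin 2) |
          a ∉ interior K ∧ a ≠ p ∧ dist a p ≤ dist a w},
        ∠ w p a₀ ≤ ∠ w p a :=
  stmt10_general K hKcp hKcv w p hp hwp hseg

end
end

section
/- Let B be an open disk in ℝ² and let w, p ∈ closure(B) with w ≠ p. Let B_{wp} denote the open disk having the segment (w, p) as a diameter. Let a ∈ ℝ² \ ((B ∩ B_{wp}) ∪ {p}) be such that ‖a − p‖ ≤ ‖a − w‖ and γ(w, p, a) ≤ π/2. Then sin γ(w, p, a) ≥ (√2/4)·‖w − p‖/diam(B). -/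
/-!
Put `d = dist w p`, `r = dist a p`, `γ = ∠ w p a`, and let `m` be the distance from the centre
of `B` to the midpoint of `wp`; Apollonius gives `4 m² ≤ 4 R² - d²`, and the law of cosines turns
`dist a p ≤ dist a w` into `2 r cos γ ≤ d`. Whichever of the two disks misses `a`, we get
`d cos γ - r ≤ 2 m sin γ`: outside `B_wp` this is Thales' `d cos γ ≤ r`, and outside `B` it comes
from comparing the power of `a` with respect to `B` with that of the foot of `a` on the segment
`wp`. Eliminating `r` leaves `d cos 2γ ≤ 2 m sin 2γ`, so `d ≤ 2 R sin 2γ ≤ 4 R sin γ` unless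
`cos 2γ ≤ 0`, when `sin γ ≥ 1/√2` anyway. As `diam B = 2 R`, `sin γ ≥ d / (4 R)` is stronger
than the claim.
-/

open EuclideanGeometry InnerProductGeometry Real
open scoped RealInnerProductSpace

lemma sq_le_sixteen_mul_sq_mul_sin_sq {θ d r m R : ℝ} (hc : 0 ≤ cos θ) (hd : 0 ≤ d)
    (hm : 4 * m ^ 2 ≤ 4 * R ^ 2 - d ^ 2) (hrc : 2 * r * cos θ ≤ d)
    (h : d * cos θ - r ≤ 2 * m * sin θ) : d ^ 2 ≤ 16 * R ^ 2 * sin θ ^ 2 := by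
  have hcs := sin_sq_add_cos_sq θ
  rcases le_or_gt (cos (2 * θ)) 0 with h2 | h2
  · rw [cos_two_mul] at h2
    nlinarith
  · have h2θ : d * cos (2 * θ) ≤ 2 * m * sin (2 * θ) := by
      rw [cos_two_mul, sin_two_mul]; nlinarith
    have hsin2 : d ^ 2 ≤ 4 * R ^ 2 * sin (2 * θ) ^ 2 := by
      nlinarith [pow_le_pow_left₀ (by positivity) h2θ 2, sin_sq_add_cos_sq (2 * θ)]
    have : sin (2 * θ) ^ 2 ≤ 4 * sin θ ^ 2 := by
      rw [sin_two_mul]; nlinarith [cos_sq_le_one θ, sq_nonneg (sin θ)]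
    nlinarith

section Affine

variable {V P : Type*} [NormedAddCommGroup V] [InnerProductSpace ℝ V] [MetricSpace P]
  [NormedAddTorsor V P]

lemma four_mul_dist_midpoint_sq_le {c w p : P} {R : ℝ} (hw : dist w c ≤ R) (hp : dist p c ≤ R) :
    4 * dist (midpoint ℝ w p) c ^ 2 ≤ 4 * R ^ 2 - dist w p ^ 2 := by
  have := dist_sq_add_dist_sq_eq_two_mul_dist_midpoint_sq_add_half_dist_sq c w p
  rw [dist_comm c, dist_comm c, dist_comm c] at this
  nlinarith [dist_nonneg (x := w) (y := c), dist_nonneg (x := p) (y := c)]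

lemma two_mul_dist_mul_cos_angle_le {a w p : P} (hwp : w ≠ p) (h : dist a p ≤ dist a w) :
    2 * dist a p * cos (∠ w p a) ≤ dist w p := by
  have hd := dist_pos.2 hwp
  have := dist_sq_eq_dist_sq_add_dist_sq_sub_two_mul_dist_mul_dist_mul_cos_angle a p w
  rw [EuclideanGeometry.angle_comm] at this
  nlinarith [mul_self_le_mul_self dist_nonneg h]

lemma dist_midpoint_sq (a w p : P) :
    dist a (midpoint ℝ w p) ^ 2 =
      dist a p ^ 2 - dist w p * dist a p * cos (∠ w p a) + (dist w p / 2) ^ 2 := by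
  have := dist_sq_add_dist_sq_eq_two_mul_dist_midpoint_sq_add_half_dist_sq a w p
  have := dist_sq_eq_dist_sq_add_dist_sq_sub_two_mul_dist_mul_dist_mul_cos_angle a p w
  rw [EuclideanGeometry.angle_comm] at this
  nlinarith

lemma mul_cos_angle_le_dist_of_le_dist_midpoint {a w p : P} (hap : a ≠ p)
    (h : dist w p / 2 ≤ dist a (midpoint ℝ w p)) : dist w p * cos (∠ w p a) ≤ dist a p := by
  have hr := dist_pos.2 hap
  have := pow_le_pow_left₀ (by positivity) h 2
  rw [dist_midpoint_sq] at this
  nlinarith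

end Affine

section Vector

variable {V : Type*} [NormedAddCommGroup V] [InnerProductSpace ℝ V]

lemma inner_sub_cos_angle_smul_eq_zero (a w p : V) (hwp : w ≠ p) :
    ⟪a - p - (dist a p * cos (∠ w p a) / dist w p) • (w - p), w - p⟫ = 0 := by
  have hd : ‖w - p‖ ≠ 0 := norm_ne_zero_iff.2 (sub_ne_zero.2 hwp)
  rw [show ∠ w p a = InnerProductGeometry.angle (w - p) (a - p) from rfl, dist_eq_norm,
    dist_eq_norm, inner_sub_left, real_inner_smul_left, real_inner_self_eq_norm_sq,
    real_inner_comm, ← cos_angle_mul_norm_mul_norm]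
  field_simp
  ring

lemma norm_sub_cos_angle_smul (a w p : V) (hwp : w ≠ p) :
    ‖a - p - (dist a p * cos (∠ w p a) / dist w p) • (w - p)‖ = dist a p * sin (∠ w p a) := by
  have hd : ‖w - p‖ ≠ 0 := norm_ne_zero_iff.2 (sub_ne_zero.2 hwp)
  rw [show ∠ w p a = InnerProductGeometry.angle (w - p) (a - p) from rfl, dist_eq_norm,
    dist_eq_norm]
  refine (sq_eq_sq₀ (norm_nonneg _) (mul_nonneg (norm_nonneg _) (sin_angle_nonneg _ _))).1 ?_
  rw [norm_sub_sq_real, real_inner_smul_right, ← cos_angle_mul_norm_mul_norm,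
    norm_smul, Real.norm_eq_abs, mul_pow, sq_abs, InnerProductGeometry.angle_comm (a - p),
    mul_pow, sin_sq]
  field_simp
  ring

lemma mul_dist_sq_sub_dist_sq_le {a w p c : V} {l R : ℝ} (hl₀ : 0 ≤ l) (hl₁ : l ≤ 1)
    (horth : ⟪a - p - l • (w - p), w - p⟫ = 0)
    (hw : dist w c ≤ R) (hp : dist p c ≤ R) (ha : R ≤ dist a c) :
    l * dist w p ^ 2 - dist a p ^ 2 ≤
      2 * dist (midpoint ℝ w p) c * ‖a - p - l • (w - p)‖ := by
  have hR : 0 ≤ R := dist_nonneg.trans hp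
  have key : dist a c ^ 2 = (1 - l) * dist p c ^ 2 + l * dist w c ^ 2 - l * dist w p ^ 2
      + dist a p ^ 2 + 2 * ⟪a - p - l • (w - p), midpoint ℝ w p - c⟫ := by
    have hmid : midpoint ℝ w p - c = (2⁻¹ : ℝ) • (w - p) + (p - c) := by
      rw [midpoint_eq_smul_add, invOf_eq_inv]; module
    have hac : a - c = (a - p) + (p - c) := by abel
    have hwc : w - c = (w - p) + (p - c) := by abel
    rw [hmid, inner_add_right, real_inner_smul_right, horth]
    simp only [dist_eq_norm, hac, hwc, norm_add_sq_real, inner_sub_left, real_inner_smul_left]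
    ring
  have hcs := real_inner_le_norm (a - p - l • (w - p)) (midpoint ℝ w p - c)
  rw [← dist_eq_norm (midpoint ℝ w p) c] at hcs
  nlinarith [mul_le_mul_of_nonneg_left (pow_le_pow_left₀ dist_nonneg hp 2) (sub_nonneg.2 hl₁),
    mul_le_mul_of_nonneg_left (pow_le_pow_left₀ dist_nonneg hw 2) hl₀,
    pow_le_pow_left₀ hR ha 2]

lemma mul_cos_angle_sub_dist_le_of_le_dist {a w p c : V} {R : ℝ} (hwp : w ≠ p) (hap : a ≠ p)
    (hcos : 0 ≤ cos (∠ w p a)) (hle : 2 * dist a p * cos (∠ w p a) ≤ dist w p)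
    (hw : dist w c ≤ R) (hp : dist p c ≤ R) (ha : R ≤ dist a c) :
    dist w p * cos (∠ w p a) - dist a p ≤ 2 * dist (midpoint ℝ w p) c * sin (∠ w p a) := by
  have hd : 0 < dist w p := dist_pos.2 hwp
  have hr : 0 < dist a p := dist_pos.2 hap
  have hfoot := mul_dist_sq_sub_dist_sq_le (by positivity) (by rw [div_le_one hd]; linarith)
    (inner_sub_cos_angle_smul_eq_zero a w p hwp) hw hp ha
  have hcoef : dist a p * cos (∠ w p a) / dist w p * dist w p ^ 2 =
      dist a p * (dist w p * cos (∠ w p a)) := by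
    field_simp
  rw [hcoef, norm_sub_cos_angle_smul a w p hwp] at hfoot
  refine le_of_mul_le_mul_left ?_ hr
  nlinarith

theorem dist_le_four_mul_mul_sin_angle {c w p a : V} {R : ℝ} (hw : dist w c ≤ R)
    (hp : dist p c ≤ R) (hwp : w ≠ p) (hap : a ≠ p)
    (ha : R ≤ dist a c ∨ dist w p / 2 ≤ dist a (midpoint ℝ w p))
    (hle : dist a p ≤ dist a w) (hangle : ∠ w p a ≤ π / 2) :
    dist w p ≤ 4 * R * sin (∠ w p a) := by
  have hcos : 0 ≤ cos (∠ w p a) :=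
    cos_nonneg_of_mem_Icc ⟨by linarith [angle_nonneg w p a, pi_pos], hangle⟩
  have hrc := two_mul_dist_mul_cos_angle_le hwp hle
  have hkey : dist w p * cos (∠ w p a) - dist a p ≤
      2 * dist (midpoint ℝ w p) c * sin (∠ w p a) := by
    rcases ha with ha | ha
    · exact mul_cos_angle_sub_dist_le_of_le_dist hwp hap hcos hrc hw hp ha
    · have := mul_cos_angle_le_dist_of_le_dist_midpoint hap ha
      have := sin_nonneg_of_nonneg_of_le_pi (angle_nonneg w p a) (angle_le_pi w p a)
      nlinarith [dist_nonneg (x := midpoint ℝ w p) (y := c)]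
  have hsq := sq_le_sixteen_mul_sq_mul_sin_sq hcos dist_nonneg
    (four_mul_dist_midpoint_sq_le hw hp) hrc hkey
  have hR : 0 ≤ R := dist_nonneg.trans hp
  have hsin := sin_nonneg_of_nonneg_of_le_pi (angle_nonneg w p a) (angle_le_pi w p a)
  exact le_of_pow_le_pow_left₀ two_ne_zero (by positivity) (by linarith)

end Vector

theorem stmt11 (c₀ : EuclideanSpace ℝ (Fin 2)) (R : ℝ) (hR : 0 < R)
    (w p : EuclideanSpace ℝ (Fin 2))
    (hw : w ∈ closure (Metric.ball c₀ R)) (hp : p ∈ closure (Metric.ball c₀ R))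
    (hwp : w ≠ p)
    (a : EuclideanSpace ℝ (Fin 2))
    (ha : a ∉ Metric.ball c₀ R ∩ Metric.ball (midpoint ℝ w p) (dist w p / 2))
    (hap : a ≠ p)
    (hle : dist a p ≤ dist a w)
    (hangle : ∠ w p a ≤ Real.pi / 2) :
    Real.sqrt 2 / 4 * (dist w p / Metric.diam (Metric.ball c₀ R)) ≤
      Real.sin (∠ w p a) := by
  have hw' := Metric.closure_ball_subset_closedBall hw
  have hp' := Metric.closure_ball_subset_closedBall hp
  have ha' : R ≤ dist a c₀ ∨ dist w p / 2 ≤ dist a (midpoint ℝ w p) := by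
    rwa [Set.mem_inter_iff, not_and_or, Metric.mem_ball, Metric.mem_ball, not_lt, not_lt] at ha
  have hsin := dist_le_four_mul_mul_sin_angle hw' hp' hwp hap ha' hle hangle
  rw [Metric.diam_ball_eq c₀ hR.le]
  calc Real.sqrt 2 / 4 * (dist w p / (2 * R)) ≤ 2 / 4 * (dist w p / (2 * R)) := by
        gcongr
        rw [Real.sqrt_le_left zero_le_two]
        norm_num
    _ = dist w p / (4 * R) := by ring
    _ ≤ Real.sin (∠ w p a) := by rwa [div_le_iff₀ (by positivity), mul_comm]
end

section
/- Let d, L ∈ ℕ with d ≥ 2 and L ≥ 12d, and let f : (ℝ^{d−1} × {−1, 1}) ∪ (ℤ^{d−1} × {0}) → ℝ^d be an L-bilipschitz mapping such that f(x) = x for all x ∈ ℝ^{d−1} × {−1, 1} and f(ℤ^{d−1} × {0}) ⊆ ℝ^{d−1} × [−1, 1]. Then there exists a (2¹⁴·d·L⁸ · 2^(2³·3^{33d}·d^{2d}·L^{26d}))-bilipschitz mapping F : ℝ^d → ℝ^d extending f. -/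
noncomputable section

/-- The two hyperplanes `ℝ^{d-1} × {-1, 1} ⊆ ℝ^d` (last coordinate equal to `±1`). -/
def wallSet (d : ℕ) (hd : 1 ≤ d) : Set (EuclideanSpace ℝ (Fin d)) :=
  {x | x ⟨d - 1, by omega⟩ = -1 ∨ x ⟨d - 1, by omega⟩ = 1}

/-- The lattice `ℤ^{d-1} × {0} ⊆ ℝ^d` (last coordinate `0`, other coordinates integers). -/
def midLattice (d : ℕ) (hd : 1 ≤ d) : Set (EuclideanSpace ℝ (Fin d)) :=
  {x | x ⟨d - 1, by omega⟩ = 0 ∧ ∀ i : Fin d, (i : ℕ) < d - 1 → ∃ n : ℤ, x i = n}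

/-!
Each lattice point `v` travels from `v` to `f v` along a piecewise linear path; the paths are cut
into steps of length at most `κ / 6` during which distinct points stay `κ = 1 / (32 L)` apart and
keep away from the walls. One step is realised by a `2`-bilipschitz bump map supported in the
`κ / 3`-balls around the moving points, and the extension is the composition of these bump maps.

Writing `f v = (A, t)`, the point `v` rises to height `3/4`, crosses horizontally above `A`, settles
at its parking height `7/8 + t/16`, and at the very end all points descend together to their
targets. Points start in the order of a slot made of the bucket `⌊(1 - t) 2L⌋` (highest targets
first) and of the residues of `v` modulo `9L`. Points crossing at the same time are then `9L` apart
horizontally while each moves by at most `2L`. If the targets of two points are horizontally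
closer than `1 / (2L)`, the lower bilipschitz bound separates their heights by at least `1 / (2L)`;
so the points lie in different buckets, their parking heights differ, and the later one, whose
target is lower, settles below the earlier one.
-/

open Set

section Bilipschitz

variable {α β γ : Type*} [PseudoMetricSpace α] [PseudoMetricSpace β] [PseudoMetricSpace γ]

lemma isBilipOn_id (s : Set α) : IsBilipOn 1 id s := fun x _ y _ => by simp

lemma IsBilipOn.mono {A B : ℝ} {f : α → β} {s : Set α} (h : IsBilipOn A f s) (hA : 0 < A)
    (hAB : A ≤ B) : IsBilipOn B f s := by
  intro x hx y hy
  obtain ⟨hlow, hup⟩ := h x hx y hy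
  have hinv : 1 / B ≤ 1 / A := one_div_le_one_div_of_le hA hAB
  exact ⟨(mul_le_mul_of_nonneg_right hinv dist_nonneg).trans hlow,
    hup.trans (mul_le_mul_of_nonneg_right hAB dist_nonneg)⟩

lemma IsBilipOn.mono_set {A : ℝ} {f : α → β} {s t : Set α} (h : IsBilipOn A f t)
    (hst : s ⊆ t) : IsBilipOn A f s :=
  fun x hx y hy => h x (hst hx) y (hst hy)

lemma IsBilipOn.comp {A B : ℝ} {g : β → γ} {f : α → β} {s : Set α} {t : Set β}
    (hg : IsBilipOn B g t) (hf : IsBilipOn A f s) (hB : 0 ≤ B) (hst : MapsTo f s t) :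
    IsBilipOn (B * A) (g ∘ f) s := by
  intro x hx y hy
  obtain ⟨hf₁, hf₂⟩ := hf x hx y hy
  obtain ⟨hg₁, hg₂⟩ := hg (f x) (hst hx) (f y) (hst hy)
  refine ⟨?_, ?_⟩
  · calc 1 / (B * A) * dist x y = 1 / B * (1 / A * dist x y) := by
          rw [← mul_assoc, one_div_mul_one_div]
      _ ≤ 1 / B * dist (f x) (f y) := by gcongr
      _ ≤ dist (g (f x)) (g (f y)) := hg₁
  · calc dist (g (f x)) (g (f y)) ≤ B * dist (f x) (f y) := hg₂
      _ ≤ B * (A * dist x y) := by gcongr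
      _ = B * A * dist x y := by ring

lemma isBilipOn_id_add {V : Type*} [SeminormedAddCommGroup V] {D : V → V}
    (hD : ∀ x y, dist (D x) (D y) ≤ dist x y / 2) :
    IsBilipOn 2 (fun x => x + D x) univ := by
  intro x _ y _
  have hlow : dist x y ≤ dist (x + D x) (y + D y) + dist (D x) (D y) := by
    simpa using dist_add_add_le (x + D x) (-D x) (y + D y) (-D y)
  have hup := dist_add_add_le x (D x) y (D y)
  have := hD x y
  have := dist_nonneg (x := x) (y := y)
  constructor <;> linarith

end Bilipschitz

section Bump

lemma eq_of_dist_lt_third {ι X : Type*} [PseudoMetricSpace X] {κ : ℝ} {p : ι → X}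
    (hsep : ∀ v w, v ≠ w → κ ≤ dist (p v) (p w)) {x : X} {v w : ι}
    (hv : dist x (p v) < κ / 3) (hw : dist x (p w) < κ / 3) : v = w := by
  by_contra hvw
  linarith [hsep v w hvw, dist_triangle_left (p v) (p w) x, dist_nonneg (x := x) (y := p v)]

variable {ι V : Type*} [NormedAddCommGroup V] [NormedSpace ℝ V] (κ : ℝ) (p q : ι → V)

def bumpAt (v : ι) (x : V) : V := max 0 (1 - 3 / κ * dist x (p v)) • (q v - p v)

open Classical in
def bumpDisplacement (x : V) : V :=
  if h : ∃ v, dist x (p v) < κ / 3 then bumpAt κ p q h.choose x else 0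

def bumpMap (x : V) : V := x + bumpDisplacement κ p q x

variable {κ p q}

lemma bumpAt_eq_zero (hκ : 0 < κ) {v : ι} {x : V} (h : κ / 3 ≤ dist x (p v)) :
    bumpAt κ p q v x = 0 := by
  have : 1 ≤ 3 / κ * dist x (p v) := by
    rw [div_mul_eq_mul_div, le_div_iff₀ hκ]; linarith
  simp [bumpAt, this]

lemma bumpDisplacement_eq_bumpAt (hκ : 0 < κ) {x : V} {v : ι}
    (hfar : ∀ w, w ≠ v → κ / 3 ≤ dist x (p w)) :
    bumpDisplacement κ p q x = bumpAt κ p q v x := by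
  unfold bumpDisplacement
  split_ifs with h
  · by_cases hv : h.choose = v
    · rw [hv]
    · exact absurd h.choose_spec (not_lt.2 (hfar _ hv))
  · exact (bumpAt_eq_zero hκ (not_lt.1 fun hv => h ⟨v, hv⟩)).symm

lemma bumpDisplacement_eq_zero {x : V} (h : ∀ v, κ / 3 ≤ dist x (p v)) :
    bumpDisplacement κ p q x = 0 :=
  dif_neg fun ⟨v, hv⟩ => (h v).not_gt hv

lemma dist_bumpAt_le (hκ : 0 < κ) (hstep : ∀ v, dist (q v) (p v) ≤ κ / 6) (v : ι)
    (x y : V) :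
    dist (bumpAt κ p q v x) (bumpAt κ p q v y) ≤ dist x y / 2 := by
  rw [bumpAt, bumpAt, dist_eq_norm, ← sub_smul, norm_smul, ← dist_eq_norm (q v)]
  have hcoef : ‖max 0 (1 - 3 / κ * dist x (p v)) - max 0 (1 - 3 / κ * dist y (p v))‖
      ≤ 3 / κ * dist x y := by
    rw [Real.norm_eq_abs, max_comm 0, max_comm 0]
    refine (abs_max_sub_max_le_abs _ _ _).trans ?_
    rw [sub_sub_sub_cancel_left, ← mul_sub, abs_mul, abs_of_pos (by positivity)]
    gcongr
    rw [dist_comm x y]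
    exact abs_dist_sub_le y x (p v)
  calc _ ≤ 3 / κ * dist x y * (κ / 6) := by gcongr; exact hstep v
    _ = dist x y / 2 := by field_simp; ring

lemma norm_bumpAt_le (hκ : 0 < κ) (hstep : ∀ v, dist (q v) (p v) ≤ κ / 6)
    {v : ι} {x : V} (h : dist x (p v) ≤ κ / 3) :
    ‖bumpAt κ p q v x‖ ≤ (κ / 3 - dist x (p v)) / 2 := by
  have hcoef : max 0 (1 - 3 / κ * dist x (p v)) = 3 / κ * (κ / 3 - dist x (p v)) := by
    rw [max_eq_right] <;> field_simp
    linarith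
  rw [bumpAt, norm_smul, hcoef, Real.norm_of_nonneg (by have := sub_nonneg.2 h; positivity),
    ← dist_eq_norm]
  calc _ ≤ 3 / κ * (κ / 3 - dist x (p v)) * (κ / 6) :=
        mul_le_mul_of_nonneg_left (hstep v) (mul_nonneg (by positivity) (sub_nonneg.2 h))
    _ = (κ / 3 - dist x (p v)) / 2 := by field_simp; ring

lemma dist_bumpDisplacement_le (hκ : 0 < κ) (hsep : ∀ v w, v ≠ w → κ ≤ dist (p v) (p w))
    (hstep : ∀ v, dist (q v) (p v) ≤ κ / 6) (x y : V) :
    dist (bumpDisplacement κ p q x) (bumpDisplacement κ p q y) ≤ dist x y / 2 := by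
  have far_of_lt :
      ∀ {z : V} {v : ι}, dist z (p v) < κ / 3 → ∀ w, w ≠ v → κ / 3 ≤ dist z (p w) :=
    fun hv w hwv => not_lt.1 fun hw => hwv (eq_of_dist_lt_third hsep hw hv)
  have common : ∀ v, (∀ w, w ≠ v → κ / 3 ≤ dist x (p w)) →
      (∀ w, w ≠ v → κ / 3 ≤ dist y (p w)) →
      dist (bumpDisplacement κ p q x) (bumpDisplacement κ p q y) ≤ dist x y / 2 := by
    intro v hx hy
    rw [bumpDisplacement_eq_bumpAt hκ hx, bumpDisplacement_eq_bumpAt hκ hy]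
    exact dist_bumpAt_le hκ hstep v x y
  by_cases hx : ∃ v, dist x (p v) < κ / 3 <;> by_cases hy : ∃ w, dist y (p w) < κ / 3
  · obtain ⟨v, hv⟩ := hx
    obtain ⟨w, hw⟩ := hy
    rcases eq_or_ne v w with rfl | hvw
    · exact common v (far_of_lt hv) (far_of_lt hw)
    -- In two different balls each displacement is at most half the distance to the boundary of
    -- its ball, and the balls are `κ / 3` apart.
    rw [bumpDisplacement_eq_bumpAt hκ (far_of_lt hv),
      bumpDisplacement_eq_bumpAt hκ (far_of_lt hw)]
    have hx' := norm_bumpAt_le hκ hstep hv.le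
    have hy' := norm_bumpAt_le hκ hstep hw.le
    have := dist_le_norm_add_norm (bumpAt κ p q v x) (bumpAt κ p q w y)
    have := hsep v w hvw
    have := dist_triangle4 (p v) x y (p w)
    rw [dist_comm (p v) x] at this
    linarith
  · obtain ⟨v, hv⟩ := hx
    exact common v (far_of_lt hv) fun w _ => not_lt.1 fun h => hy ⟨w, h⟩
  · obtain ⟨w, hw⟩ := hy
    exact common w (fun v _ => not_lt.1 fun h => hx ⟨v, h⟩) (far_of_lt hw)
  · simp only [bumpDisplacement, dif_neg hx, dif_neg hy, dist_self]
    positivity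

lemma bumpMap_isBilipOn (hκ : 0 < κ) (hsep : ∀ v w, v ≠ w → κ ≤ dist (p v) (p w))
    (hstep : ∀ v, dist (q v) (p v) ≤ κ / 6) :
    IsBilipOn 2 (bumpMap κ p q) univ :=
  isBilipOn_id_add (dist_bumpDisplacement_le hκ hsep hstep)

lemma bumpMap_apply_center (hκ : 0 < κ) (hsep : ∀ v w, v ≠ w → κ ≤ dist (p v) (p w))
    (v : ι) :
    bumpMap κ p q (p v) = q v := by
  have hv : dist (p v) (p v) < κ / 3 := by rw [dist_self]; positivity
  rw [bumpMap, bumpDisplacement_eq_bumpAt hκ fun w hwv =>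
    not_lt.1 fun hw => hwv (eq_of_dist_lt_third hsep hw hv)]
  simp [bumpAt]

lemma bumpMap_eq_self {x : V} (h : ∀ v, κ / 3 ≤ dist x (p v)) : bumpMap κ p q x = x := by
  rw [bumpMap, bumpDisplacement_eq_zero h, add_zero]

end Bump

theorem exists_isBilipOn_of_separated_steps {ι V : Type*} [NormedAddCommGroup V]
    [NormedSpace ℝ V] {κ : ℝ} (hκ : 0 < κ) (P : ℕ → ι → V)
    (hsep : ∀ k v w, v ≠ w → κ ≤ dist (P k v) (P k w))
    (hstep : ∀ k v, dist (P (k + 1) v) (P k v) ≤ κ / 6) (N : ℕ) :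
    ∃ F : V → V, IsBilipOn (2 ^ N) F univ ∧ (∀ v, F (P 0 v) = P N v) ∧
      ∀ x, (∀ k v, κ / 3 ≤ dist x (P k v)) → F x = x := by
  induction N with
  | zero => exact ⟨id, by simpa using isBilipOn_id univ, fun _ => rfl, fun _ _ => rfl⟩
  | succ N ih =>
    obtain ⟨F, hF, hFP, hFfix⟩ := ih
    refine ⟨bumpMap κ (P N) (P (N + 1)) ∘ F, ?_, fun v => ?_, fun x hx => ?_⟩
    · rw [pow_succ']
      exact (bumpMap_isBilipOn hκ (hsep N) (hstep N)).comp hF zero_le_two (mapsTo_univ _ _)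
    · rw [Function.comp_apply, hFP, bumpMap_apply_center hκ (hsep N)]
    · rw [Function.comp_apply, hFfix x hx, bumpMap_eq_self (hx N)]

section PiecewiseLinear

variable {V : Type*} [AddCommGroup V] [Module ℝ V]

def roundFraction (m k : ℕ) : ℝ := ((k % m : ℕ) : ℝ) / m

lemma roundFraction_mem_Icc {m : ℕ} (hm : 0 < m) (k : ℕ) :
    roundFraction m k ∈ Icc (0 : ℝ) 1 :=
  ⟨by unfold roundFraction; positivity,
    div_le_one_of_le₀ (by exact_mod_cast (Nat.mod_lt k hm).le) (Nat.cast_nonneg m)⟩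

def piecewiseLinear (m : ℕ) (W : ℕ → V) (k : ℕ) : V :=
  AffineMap.lineMap (W (k / m)) (W (k / m + 1)) (roundFraction m k)

lemma piecewiseLinear_zero (m : ℕ) (W : ℕ → V) : piecewiseLinear m W 0 = W 0 := by
  simp [piecewiseLinear, roundFraction]

lemma piecewiseLinear_mul {m : ℕ} (hm : 0 < m) (W : ℕ → V) (g : ℕ) :
    piecewiseLinear m W (g * m) = W g := by
  simp [piecewiseLinear, roundFraction, Nat.mul_div_cancel _ hm]

lemma piecewiseLinear_succ {m : ℕ} (hm : 0 < m) (W : ℕ → V) (k : ℕ) :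
    piecewiseLinear m W (k + 1) =
      AffineMap.lineMap (W (k / m)) (W (k / m + 1)) (roundFraction m k + 1 / m) := by
  have hmR : (0 : ℝ) < m := by exact_mod_cast hm
  have hk : k + 1 = (k % m + 1) + m * (k / m) := by rw [add_right_comm, Nat.mod_add_div]
  have hdiv : (k + 1) / m = (k % m + 1) / m + k / m := by rw [hk, Nat.add_mul_div_left _ _ hm]
  have hmod : (k + 1) % m = (k % m + 1) % m := by rw [hk, Nat.add_mul_mod_self_left]
  rcases Nat.lt_or_eq_of_le (Nat.mod_lt k hm : k % m + 1 ≤ m) with hlt | hlast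
  · rw [piecewiseLinear, roundFraction, roundFraction, hdiv, hmod, Nat.div_eq_of_lt hlt,
      Nat.mod_eq_of_lt hlt, zero_add]
    push_cast
    ring_nf
  · have heq : k % m + 1 = m := hlast
    rw [piecewiseLinear, roundFraction, hdiv, hmod, heq, Nat.div_self hm, Nat.mod_self, add_comm 1]
    have : roundFraction m k + 1 / m = 1 := by
      rw [roundFraction, ← add_div, div_eq_one_iff_eq hmR.ne']
      exact_mod_cast heq
    rw [this, AffineMap.lineMap_apply_one]
    simp

lemma dist_piecewiseLinear_succ_le {V : Type*} [NormedAddCommGroup V] [NormedSpace ℝ V] {m : ℕ}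
    (hm : 0 < m) (W : ℕ → V) (k : ℕ) :
    dist (piecewiseLinear m W (k + 1)) (piecewiseLinear m W k) ≤
      dist (W (k / m)) (W (k / m + 1)) / m := by
  rw [piecewiseLinear_succ hm, piecewiseLinear, dist_lineMap_lineMap, Real.dist_eq]
  simp [div_eq_inv_mul]

end PiecewiseLinear

section Slab

variable {n : ℕ}

def atHeight (x : EuclideanSpace ℝ (Fin (n + 1))) (s : ℝ) : EuclideanSpace ℝ (Fin (n + 1)) :=
  WithLp.toLp 2 (Function.update x.ofLp (Fin.last n) s)

variable {x y : EuclideanSpace ℝ (Fin (n + 1))} {s s' : ℝ}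

@[simp]
lemma atHeight_apply_last : atHeight x s (Fin.last n) = s := by simp [atHeight]

@[simp]
lemma atHeight_apply_castSucc (i : Fin n) : atHeight x s i.castSucc = x i.castSucc := by
  simp [atHeight, Fin.castSucc_ne_last]

@[simp]
lemma atHeight_atHeight : atHeight (atHeight x s) s' = atHeight x s' := by
  ext i; induction i using Fin.lastCases <;> simp

lemma atHeight_self : atHeight x (x (Fin.last n)) = x := by
  ext i; induction i using Fin.lastCases <;> simp

lemma lineMap_atHeight (τ : ℝ) :
    AffineMap.lineMap (atHeight x s) (atHeight y s') τ =
      atHeight (AffineMap.lineMap x y τ) (AffineMap.lineMap s s' τ) := by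
  ext i; induction i using Fin.lastCases <;> simp [AffineMap.lineMap_apply_module]

lemma lineMap_atHeight_self (τ : ℝ) :
    AffineMap.lineMap (atHeight x s) (atHeight x s') τ =
      atHeight x (AffineMap.lineMap s s' τ) := by
  rw [lineMap_atHeight, AffineMap.lineMap_same_apply]

lemma lineMap_atHeight_left_self (τ : ℝ) :
    AffineMap.lineMap (atHeight x s) x τ =
      atHeight x (AffineMap.lineMap s (x (Fin.last n)) τ) := by
  have h := lineMap_atHeight_self (x := x) (s := s) (s' := x (Fin.last n)) τ
  rwa [atHeight_self] at h

lemma dist_atHeight_sq :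
    dist (atHeight x s) (atHeight y s') ^ 2 =
      dist (atHeight x 0) (atHeight y 0) ^ 2 + (s - s') ^ 2 := by
  rw [EuclideanSpace.dist_eq, EuclideanSpace.dist_eq, Real.sq_sqrt (by positivity),
    Real.sq_sqrt (by positivity)]
  simp [Fin.sum_univ_castSucc, Real.dist_eq, sq_abs]

lemma abs_sub_le_dist_atHeight : |s - s'| ≤ dist (atHeight x s) (atHeight y s') := by
  refine (pow_le_pow_iff_left₀ (abs_nonneg _) dist_nonneg two_ne_zero).1 ?_
  rw [sq_abs, dist_atHeight_sq]
  exact le_add_of_nonneg_left (sq_nonneg _)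

lemma dist_atHeight_zero_le :
    dist (atHeight x 0) (atHeight y 0) ≤ dist (atHeight x s) (atHeight y s') := by
  refine (pow_le_pow_iff_left₀ dist_nonneg dist_nonneg two_ne_zero).1 ?_
  rw [dist_atHeight_sq (s := s)]
  exact le_add_of_nonneg_right (sq_nonneg _)

lemma dist_atHeight_le :
    dist (atHeight x s) (atHeight y s') ≤ dist (atHeight x 0) (atHeight y 0) + |s - s'| := by
  refine (pow_le_pow_iff_left₀ dist_nonneg (by positivity) two_ne_zero).1 ?_
  rw [dist_atHeight_sq, add_sq, sq_abs]
  nlinarith [dist_nonneg (x := atHeight x 0) (y := atHeight y 0), abs_nonneg (s - s')]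

lemma dist_atHeight_self : dist (atHeight x s) (atHeight x s') = |s - s'| := by
  rw [← Real.sqrt_sq dist_nonneg, dist_atHeight_sq, dist_self, zero_pow two_ne_zero, zero_add,
    Real.sqrt_sq_eq_abs]

lemma abs_sub_le_dist_atHeight_castSucc (i : Fin n) :
    |x i.castSucc - y i.castSucc| ≤ dist (atHeight x s) (atHeight y s') := by
  simpa [Real.dist_eq] using PiLp.dist_apply_le (atHeight x s) (atHeight y s') i.castSucc

end Slab

section Lattice

variable {n : ℕ}

def latticePoint (v : Fin n → ℤ) : EuclideanSpace ℝ (Fin (n + 1)) :=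
  WithLp.toLp 2 (Fin.snoc (α := fun _ => ℝ) (fun i => (v i : ℝ)) 0)

@[simp]
lemma latticePoint_apply_last (v : Fin n → ℤ) : latticePoint v (Fin.last n) = 0 := by
  simp [latticePoint]

@[simp]
lemma latticePoint_apply_castSucc (v : Fin n → ℤ) (i : Fin n) :
    latticePoint v i.castSucc = v i := by
  simp [latticePoint]

@[simp]
lemma atHeight_latticePoint_zero (v : Fin n → ℤ) :
    atHeight (latticePoint v) 0 = latticePoint v := by
  conv_rhs => rw [← atHeight_self (x := latticePoint v)]
  rw [latticePoint_apply_last]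

lemma latticePoint_mem_midLattice (v : Fin n → ℤ) :
    latticePoint v ∈ midLattice (n + 1) (Nat.le_add_left 1 n) := by
  refine ⟨latticePoint_apply_last v, fun i hi => ⟨v ⟨i, hi⟩, ?_⟩⟩
  exact latticePoint_apply_castSucc v ⟨i, hi⟩

lemma midLattice_subset_range :
    midLattice (n + 1) (Nat.le_add_left 1 n) ⊆ range (latticePoint (n := n)) := by
  rintro x ⟨hlast, hint⟩
  choose v hv using fun i : Fin n => hint i.castSucc i.2
  refine ⟨v, ?_⟩
  ext i
  induction i using Fin.lastCases
  · exact (latticePoint_apply_last v).trans hlast.symm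
  · simp [hv]

lemma one_le_abs_intCast_sub {a b : ℤ} (h : a ≠ b) : (1 : ℝ) ≤ |(a : ℝ) - b| := by
  exact_mod_cast Int.one_le_abs (sub_ne_zero.2 h)

lemma one_le_dist_atHeight_latticePoint {v w : Fin n → ℤ} (hvw : v ≠ w) (s s' : ℝ) :
    1 ≤ dist (atHeight (latticePoint v) s) (atHeight (latticePoint w) s') := by
  obtain ⟨i, hi⟩ := Function.ne_iff.1 hvw
  have h := abs_sub_le_dist_atHeight_castSucc (x := latticePoint v) (y := latticePoint w) (s := s)
    (s' := s') i
  rw [latticePoint_apply_castSucc, latticePoint_apply_castSucc] at h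
  exact (one_le_abs_intCast_sub hi).trans h

end Lattice

section ResidueCode

variable {n M : ℕ}

def residueCode (M : ℕ) (v : Fin n → ℤ) : ℕ :=
  Nat.ofDigits M (List.ofFn fun i => (v i % (M : ℤ)).toNat)

lemma toNat_emod_lt (hM : 0 < M) (a : ℤ) : (a % (M : ℤ)).toNat < M := by
  have := Int.emod_lt_of_pos a (Int.natCast_pos.2 hM)
  omega

lemma residueCode_lt (hM : 1 < M) (v : Fin n → ℤ) : residueCode M v < M ^ n := by
  simpa [residueCode] using Nat.ofDigits_lt_base_pow_length hM
    (l := List.ofFn fun i => (v i % (M : ℤ)).toNat)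
    (by simpa using fun i => toNat_emod_lt (by omega) (v i))

lemma dvd_sub_of_residueCode_eq (hM : 1 < M) {v w : Fin n → ℤ}
    (h : residueCode M v = residueCode M w) (i : Fin n) : (M : ℤ) ∣ v i - w i := by
  have hdigits := congrFun (List.ofFn_injective (Nat.ofDigits_inj_of_len_eq hM (by simp)
    (by simpa using fun i => toNat_emod_lt (by omega) (v i))
    (by simpa using fun i => toNat_emod_lt (by omega) (w i)) h)) i
  have hM' : (M : ℤ) ≠ 0 := by omega
  have hmod : w i % M = v i % M := by
    rw [← Int.toNat_of_nonneg (Int.emod_nonneg (v i) hM'),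
      ← Int.toNat_of_nonneg (Int.emod_nonneg (w i) hM'), hdigits]
  exact Int.ModEq.dvd hmod

lemma le_abs_intCast_sub_of_dvd {a b : ℤ} (hab : a ≠ b) (h : (M : ℤ) ∣ a - b) :
    (M : ℝ) ≤ |(a : ℝ) - b| := by
  exact_mod_cast Int.le_of_dvd (abs_pos.2 (sub_ne_zero.2 hab)) ((dvd_abs _ _).2 h)

end ResidueCode

section Schedule

variable {n L : ℕ} {f : EuclideanSpace ℝ (Fin (n + 1)) → EuclideanSpace ℝ (Fin (n + 1))}

structure AdmissibleMap (n L : ℕ)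
    (f : EuclideanSpace ℝ (Fin (n + 1)) → EuclideanSpace ℝ (Fin (n + 1))) : Prop where
  sixteen_le : 16 ≤ L
  isBilipOn : IsBilipOn L f (wallSet (n + 1) (Nat.le_add_left 1 n) ∪ range latticePoint)
  eq_self_of_mem_wallSet : ∀ x ∈ wallSet (n + 1) (Nat.le_add_left 1 n), f x = x
  apply_last_mem : ∀ v, f (latticePoint v) (Fin.last n) ∈ Icc (-1 : ℝ) 1

variable (L f)

def targetHeight (v : Fin n → ℤ) : ℝ := f (latticePoint v) (Fin.last n)

def parkingHeight (v : Fin n → ℤ) : ℝ := 7 / 8 + targetHeight f v / 16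

def bucket (v : Fin n → ℤ) : ℕ := ⌊(1 - targetHeight f v) * (2 * L)⌋₊

def slot (v : Fin n → ℤ) : ℕ := bucket L f v * (9 * L) ^ n + residueCode (9 * L) v

variable (n) in
def descentRound : ℕ := 12 * L * (9 * L) ^ n

def roundLength : ℕ := 600 * L ^ 2

variable (n) in
def numSteps : ℕ := (descentRound n L + 1) * roundLength L

def minSep : ℝ := 1 / (32 * L)

def waypoint (v : Fin n → ℤ) (g : ℕ) : EuclideanSpace ℝ (Fin (n + 1)) :=
  if g ≤ 3 * slot L f v then latticePoint v
  else if g = 3 * slot L f v + 1 then atHeight (latticePoint v) (3 / 4)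
  else if g = 3 * slot L f v + 2 then atHeight (f (latticePoint v)) (3 / 4)
  else if g ≤ descentRound n L then atHeight (f (latticePoint v)) (parkingHeight f v)
  else f (latticePoint v)

def motion (v : Fin n → ℤ) (k : ℕ) : EuclideanSpace ℝ (Fin (n + 1)) :=
  piecewiseLinear (roundLength L) (waypoint L f v) k

variable {L f}

lemma atHeight_mem_wallSet {s : ℝ} (hs : s = -1 ∨ s = 1)
    (x : EuclideanSpace ℝ (Fin (n + 1))) :
    atHeight x s ∈ wallSet (n + 1) (Nat.le_add_left 1 n) := by
  show atHeight x s (Fin.last n) = -1 ∨ atHeight x s (Fin.last n) = 1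
  simpa using hs

lemma atHeight_targetHeight (v : Fin n → ℤ) :
    atHeight (f (latticePoint v)) (targetHeight f v) = f (latticePoint v) :=
  atHeight_self

section Phases

variable {v : Fin n → ℤ} {g k : ℕ}

lemma waypoint_of_le (h : g ≤ 3 * slot L f v) : waypoint L f v g = latticePoint v :=
  if_pos h

lemma waypoint_of_eq_add_one (h : g = 3 * slot L f v + 1) :
    waypoint L f v g = atHeight (latticePoint v) (3 / 4) := by
  rw [waypoint, if_neg (by omega), if_pos h]

lemma waypoint_of_eq_add_two (h : g = 3 * slot L f v + 2) :
    waypoint L f v g = atHeight (f (latticePoint v)) (3 / 4) := by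
  rw [waypoint, if_neg (by omega), if_neg (by omega), if_pos h]

lemma waypoint_of_lt_of_le (h : 3 * slot L f v + 2 < g) (hg : g ≤ descentRound n L) :
    waypoint L f v g = atHeight (f (latticePoint v)) (parkingHeight f v) := by
  rw [waypoint, if_neg (by omega), if_neg (by omega), if_neg (by omega), if_pos hg]

lemma waypoint_of_descentRound_lt (h : 3 * slot L f v + 2 < g) (hg : descentRound n L < g) :
    waypoint L f v g = f (latticePoint v) := by
  rw [waypoint, if_neg (by omega), if_neg (by omega), if_neg (by omega), if_neg (by omega)]

lemma motion_of_lt (h : k / roundLength L < 3 * slot L f v) : motion L f v k = latticePoint v := by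
  rw [motion, piecewiseLinear, waypoint_of_le h.le, waypoint_of_le h, AffineMap.lineMap_same_apply]

lemma motion_of_eq (h : k / roundLength L = 3 * slot L f v) :
    motion L f v k = atHeight (latticePoint v)
      (AffineMap.lineMap 0 (3 / 4) (roundFraction (roundLength L) k)) := by
  rw [motion, piecewiseLinear, waypoint_of_le h.le, waypoint_of_eq_add_one (by omega),
    ← lineMap_atHeight_self, atHeight_latticePoint_zero]

lemma motion_of_eq_add_one (h : k / roundLength L = 3 * slot L f v + 1) :
    motion L f v k = atHeight
      (AffineMap.lineMap (latticePoint v) (f (latticePoint v)) (roundFraction (roundLength L) k))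
      (3 / 4) := by
  rw [motion, piecewiseLinear, waypoint_of_eq_add_one h, waypoint_of_eq_add_two (by omega),
    lineMap_atHeight, AffineMap.lineMap_same_apply]

lemma motion_of_eq_add_two (h : k / roundLength L = 3 * slot L f v + 2)
    (hs : 3 * slot L f v + 3 ≤ descentRound n L) :
    motion L f v k = atHeight (f (latticePoint v))
      (AffineMap.lineMap (3 / 4) (parkingHeight f v) (roundFraction (roundLength L) k)) := by
  rw [motion, piecewiseLinear, waypoint_of_eq_add_two h, waypoint_of_lt_of_le (by omega) (by omega),
    lineMap_atHeight_self]

lemma motion_of_lt_of_lt (h : 3 * slot L f v + 2 < k / roundLength L)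
    (hk : k / roundLength L < descentRound n L) :
    motion L f v k = atHeight (f (latticePoint v)) (parkingHeight f v) := by
  rw [motion, piecewiseLinear, waypoint_of_lt_of_le h hk.le, waypoint_of_lt_of_le (by omega) hk,
    AffineMap.lineMap_same_apply]

lemma motion_of_eq_descentRound (h : k / roundLength L = descentRound n L)
    (hs : 3 * slot L f v + 3 ≤ descentRound n L) :
    motion L f v k = atHeight (f (latticePoint v))
      (AffineMap.lineMap (parkingHeight f v) (targetHeight f v)
        (roundFraction (roundLength L) k)) := by
  rw [motion, piecewiseLinear, waypoint_of_lt_of_le (by omega) h.le,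
    waypoint_of_descentRound_lt (by omega) (by omega), lineMap_atHeight_left_self, targetHeight]

lemma motion_of_descentRound_lt (h : descentRound n L < k / roundLength L)
    (hs : 3 * slot L f v + 3 ≤ descentRound n L) : motion L f v k = f (latticePoint v) := by
  rw [motion, piecewiseLinear, waypoint_of_descentRound_lt (by omega) h,
    waypoint_of_descentRound_lt (by omega) (by omega), AffineMap.lineMap_same_apply]

lemma exists_motion_eq_atHeight_latticePoint (h : k / roundLength L ≤ 3 * slot L f v) :
    ∃ σ, motion L f v k = atHeight (latticePoint v) σ := by
  rcases h.lt_or_eq with h | h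
  · exact ⟨0, by rw [motion_of_lt h, atHeight_latticePoint_zero]⟩
  · exact ⟨_, motion_of_eq h⟩

lemma motion_zero (v : Fin n → ℤ) : motion L f v 0 = latticePoint v := by
  rw [motion, piecewiseLinear_zero, waypoint_of_le (Nat.zero_le _)]

end Phases

namespace AdmissibleMap

variable (hf : AdmissibleMap n L f)
include hf

lemma cast_pos : (0 : ℝ) < L := by have := hf.sixteen_le; positivity

lemma one_div_cast_le : 1 / (L : ℝ) ≤ 1 / 16 :=
  one_div_le_one_div_of_le (by norm_num) (by exact_mod_cast hf.sixteen_le)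

lemma one_lt_nine_mul : 1 < 9 * L := by have := hf.sixteen_le; omega

lemma roundLength_pos : 0 < roundLength L := by
  have := hf.sixteen_le; unfold roundLength; positivity

lemma minSep_le_one_div_sixteen : minSep L ≤ 1 / 16 := by
  rw [minSep]
  exact one_div_le_one_div_of_le (by norm_num) (by have := hf.sixteen_le; norm_cast; omega)

lemma dist_latticePoint_atHeight_le (v : Fin n → ℤ) {s : ℝ} (hs : s = -1 ∨ s = 1) :
    dist (latticePoint v) (atHeight (f (latticePoint v)) s) ≤ L * |targetHeight f v - s| := by
  have hwall := atHeight_mem_wallSet hs (f (latticePoint v))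
  have h := (hf.isBilipOn _ (Or.inr ⟨v, rfl⟩) _ (Or.inl hwall)).1
  rw [hf.eq_self_of_mem_wallSet _ hwall, ← atHeight_targetHeight (f := f) v, atHeight_atHeight,
    dist_atHeight_self, one_div, inv_mul_le_iff₀ hf.cast_pos] at h
  exact h

lemma abs_targetHeight_le (v : Fin n → ℤ) : |targetHeight f v| ≤ 1 - 1 / L := by
  have hmem : targetHeight f v ∈ Icc (-1 : ℝ) 1 := hf.apply_last_mem v
  have hbound : ∀ s : ℝ, (s = -1 ∨ s = 1) → 1 ≤ L * |targetHeight f v - s| := fun s hs =>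
    calc (1 : ℝ) = |0 - s| := by rcases hs with rfl | rfl <;> norm_num
      _ ≤ dist (latticePoint v) (atHeight (f (latticePoint v)) s) := by
        rw [← atHeight_latticePoint_zero]; exact abs_sub_le_dist_atHeight
      _ ≤ _ := hf.dist_latticePoint_atHeight_le v hs
  have hlow := hbound (-1) (Or.inl rfl)
  have hup := hbound 1 (Or.inr rfl)
  rw [abs_of_nonneg (by linarith [hmem.1])] at hlow
  rw [abs_of_nonpos (by linarith [hmem.2])] at hup
  have h₁ := (div_le_iff₀' hf.cast_pos).2 hlow
  have h₂ := (div_le_iff₀' hf.cast_pos).2 hup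
  rw [abs_le]
  constructor <;> linarith

lemma dist_latticePoint_target_le (v : Fin n → ℤ) :
    dist (latticePoint v) (atHeight (f (latticePoint v)) 0) ≤ 2 * L := by
  have ht := abs_le.1 (hf.abs_targetHeight_le v)
  have hpos : 0 < 1 / (L : ℝ) := one_div_pos.2 hf.cast_pos
  calc _ ≤ dist (latticePoint v) (atHeight (f (latticePoint v)) 1) := by
        rw [← atHeight_latticePoint_zero]; exact dist_atHeight_zero_le
    _ ≤ L * |targetHeight f v - 1| := hf.dist_latticePoint_atHeight_le v (Or.inr rfl)
    _ ≤ L * 2 := by gcongr; rw [abs_le]; constructor <;> linarith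
    _ = 2 * L := mul_comm _ _

lemma abs_apply_sub_le (v : Fin n → ℤ) (i : Fin n) :
    |f (latticePoint v) i.castSucc - v i| ≤ 2 * L := by
  have h := abs_sub_le_dist_atHeight_castSucc (x := f (latticePoint v)) (y := latticePoint v)
    (s := 0) (s' := 0) i
  rw [latticePoint_apply_castSucc, atHeight_latticePoint_zero, dist_comm] at h
  exact h.trans (hf.dist_latticePoint_target_le v)

lemma one_div_le_dist_add_abs_sub {v w : Fin n → ℤ} (hvw : v ≠ w) :
    1 / L ≤ dist (atHeight (f (latticePoint v)) 0) (atHeight (f (latticePoint w)) 0) +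
      |targetHeight f v - targetHeight f w| := by
  have hlat : 1 ≤ dist (latticePoint v) (latticePoint w) := by
    simpa using one_le_dist_atHeight_latticePoint hvw 0 0
  calc 1 / (L : ℝ) ≤ 1 / L * dist (latticePoint v) (latticePoint w) :=
        le_mul_of_one_le_right (by positivity) hlat
    _ ≤ dist (f (latticePoint v)) (f (latticePoint w)) :=
        (hf.isBilipOn _ (Or.inr ⟨v, rfl⟩) _ (Or.inr ⟨w, rfl⟩)).1
    _ ≤ _ := by
        rw [← atHeight_targetHeight (f := f) v, ← atHeight_targetHeight (f := f) w]
        exact dist_atHeight_le.trans_eq (by simp)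

lemma one_sub_targetHeight_mul_nonneg (v : Fin n → ℤ) :
    0 ≤ (1 - targetHeight f v) * (2 * L) :=
  mul_nonneg (sub_nonneg.2 (hf.apply_last_mem v).2) (by positivity)

lemma bucket_lt (v : Fin n → ℤ) : bucket L f v < 4 * L := by
  have ht := abs_le.1 (hf.abs_targetHeight_le v)
  have hL := hf.cast_pos
  rw [bucket, Nat.floor_lt (hf.one_sub_targetHeight_mul_nonneg v)]
  push_cast
  calc (1 - targetHeight f v) * (2 * L) < 2 * (2 * L) := by
        gcongr; linarith [one_div_pos.2 hL]
    _ = 4 * L := by ring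

lemma abs_sub_lt_of_bucket_eq {v w : Fin n → ℤ} (h : bucket L f v = bucket L f w) :
    |targetHeight f v - targetHeight f w| < 1 / (2 * L) := by
  have hv := Nat.floor_le (hf.one_sub_targetHeight_mul_nonneg v)
  have hv' := Nat.lt_floor_add_one ((1 - targetHeight f v) * (2 * L))
  have hw := Nat.floor_le (hf.one_sub_targetHeight_mul_nonneg w)
  have hw' := Nat.lt_floor_add_one ((1 - targetHeight f w) * (2 * L))
  simp only [bucket] at h
  rw [h] at hv hv'
  have h2L : (0 : ℝ) < 2 * L := by linarith [hf.cast_pos]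
  rw [abs_sub_lt_iff, lt_div_iff₀ h2L, lt_div_iff₀ h2L]
  constructor <;> linarith

lemma targetHeight_lt_of_bucket_lt {v w : Fin n → ℤ} (h : bucket L f w < bucket L f v) :
    targetHeight f v < targetHeight f w := by
  have hv := Nat.floor_le (hf.one_sub_targetHeight_mul_nonneg v)
  have hw := Nat.lt_floor_add_one ((1 - targetHeight f w) * (2 * L))
  have h' : (bucket L f w : ℝ) + 1 ≤ bucket L f v := by exact_mod_cast h
  simp only [bucket] at h'
  nlinarith [hf.cast_pos]

lemma slot_div (v : Fin n → ℤ) : slot L f v / (9 * L) ^ n = bucket L f v := by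
  rw [slot, add_comm, Nat.add_mul_div_right _ _ (by have := hf.one_lt_nine_mul; positivity),
    Nat.div_eq_of_lt (residueCode_lt hf.one_lt_nine_mul v), zero_add]

lemma slot_mod (v : Fin n → ℤ) : slot L f v % (9 * L) ^ n = residueCode (9 * L) v := by
  rw [slot, add_comm, Nat.add_mul_mod_self_right,
    Nat.mod_eq_of_lt (residueCode_lt hf.one_lt_nine_mul v)]

lemma three_mul_slot_add_three_le (v : Fin n → ℤ) :
    3 * slot L f v + 3 ≤ descentRound n L := by
  have hb := hf.bucket_lt v
  have hc := residueCode_lt hf.one_lt_nine_mul v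
  have : slot L f v + 1 ≤ 4 * L * (9 * L) ^ n := by
    calc slot L f v + 1 ≤ (bucket L f v + 1) * (9 * L) ^ n := by rw [slot]; nlinarith
      _ ≤ 4 * L * (9 * L) ^ n := Nat.mul_le_mul_right _ hb
  rw [descentRound]
  nlinarith

lemma parkingHeight_mem (v : Fin n → ℤ) :
    parkingHeight f v ∈ Icc (13 / 16 : ℝ) (15 / 16) := by
  have ht := hf.apply_last_mem v
  constructor <;> simp only [parkingHeight, targetHeight] <;> linarith [ht.1, ht.2]

lemma minSep_le_dist_atHeight {v w : Fin n → ℤ} (hvw : v ≠ w) {σ σ' : ℝ}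
    (h : 1 / (2 * L) ≤ |targetHeight f v - targetHeight f w| →
      |targetHeight f v - targetHeight f w| / 16 ≤ |σ - σ'|) :
    minSep L ≤ dist (atHeight (f (latticePoint v)) σ) (atHeight (f (latticePoint w)) σ') := by
  have hL := hf.cast_pos
  have hsep : minSep L = 1 / (2 * L) / 16 := by rw [minSep]; field_simp; ring
  rcases lt_or_ge |targetHeight f v - targetHeight f w| (1 / (2 * L)) with hclose | hfar
  · have hsplit := hf.one_div_le_dist_add_abs_sub hvw
    have : 1 / (L : ℝ) = 1 / (2 * L) + 1 / (2 * L) := by field_simp; ring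
    have : 0 < 1 / (2 * (L : ℝ)) := by positivity
    linarith [dist_atHeight_zero_le (x := f (latticePoint v)) (y := f (latticePoint w)) (s := σ)
      (s' := σ')]
  · linarith [h hfar, abs_sub_le_dist_atHeight (x := f (latticePoint v))
      (y := f (latticePoint w)) (s := σ) (s' := σ')]

lemma one_le_dist_cross {v w : Fin n → ℤ} (hvw : v ≠ w)
    (hcode : residueCode (9 * L) v = residueCode (9 * L) w) {τ : ℝ}
    (hτ : τ ∈ Icc (0 : ℝ) 1) (σ σ' : ℝ) :
    1 ≤ dist (atHeight (AffineMap.lineMap (latticePoint v) (f (latticePoint v)) τ) σ)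
      (atHeight (AffineMap.lineMap (latticePoint w) (f (latticePoint w)) τ) σ') := by
  obtain ⟨i, hi⟩ := Function.ne_iff.1 hvw
  have hfar := le_abs_intCast_sub_of_dvd hi (dvd_sub_of_residueCode_eq hf.one_lt_nine_mul hcode i)
  have hv := abs_le.1 (hf.abs_apply_sub_le v i)
  have hw := abs_le.1 (hf.abs_apply_sub_le w i)
  have hcoord := abs_sub_le_dist_atHeight_castSucc (s := σ) (s' := σ') i
    (x := AffineMap.lineMap (latticePoint v) (f (latticePoint v)) τ)
    (y := AffineMap.lineMap (latticePoint w) (f (latticePoint w)) τ)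
  simp only [AffineMap.lineMap_apply_module, PiLp.add_apply, PiLp.smul_apply, smul_eq_mul,
    latticePoint_apply_castSucc] at hcoord
  set a := f (latticePoint v) i.castSucc
  set b := f (latticePoint w) i.castSucc
  have hdrift : |τ * ((a - v i) - (b - w i))| ≤ 4 * L := by
    rw [abs_mul, abs_of_nonneg hτ.1]
    calc τ * |(a - v i) - (b - w i)| ≤ 1 * (4 * L) :=
          mul_le_mul hτ.2 (abs_le.2 ⟨by linarith, by linarith⟩) (abs_nonneg _) zero_le_one
      _ = 4 * L := one_mul _
  have hsplit : (v i : ℝ) - w i =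
      ((1 - τ) * v i + τ * a - ((1 - τ) * w i + τ * b)) - τ * ((a - v i) - (b - w i)) := by
    ring
  rw [hsplit] at hfar
  push_cast at hfar
  rw [AffineMap.lineMap_apply_module, AffineMap.lineMap_apply_module]
  linarith [abs_sub ((1 - τ) * v i + τ * a - ((1 - τ) * w i + τ * b))
    (τ * ((a - v i) - (b - w i))), (show (16 : ℝ) ≤ L by exact_mod_cast hf.sixteen_le)]

lemma minSep_le_dist_descent {v w : Fin n → ℤ} (hvw : v ≠ w) {τ : ℝ}
    (hτ : τ ∈ Icc (0 : ℝ) 1) :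
    minSep L ≤ dist
      (atHeight (f (latticePoint v)) (AffineMap.lineMap (parkingHeight f v) (targetHeight f v) τ))
      (atHeight (f (latticePoint w))
        (AffineMap.lineMap (parkingHeight f w) (targetHeight f w) τ)) := by
  refine hf.minSep_le_dist_atHeight hvw fun _ => ?_
  have hdiff : AffineMap.lineMap (parkingHeight f v) (targetHeight f v) τ -
      AffineMap.lineMap (parkingHeight f w) (targetHeight f w) τ =
        ((1 - τ) / 16 + τ) * (targetHeight f v - targetHeight f w) := by
    simp only [AffineMap.lineMap_apply_ring', parkingHeight]; ring
  rw [hdiff, abs_mul, abs_of_nonneg (a := (1 - τ) / 16 + τ) (by linarith [hτ.1, hτ.2])]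
  nlinarith [abs_nonneg (targetHeight f v - targetHeight f w), hτ.1, hτ.2]

lemma minSep_le_dist_motion_of_descentRound_le {v w : Fin n → ℤ} (hvw : v ≠ w) {k : ℕ}
    (hk : descentRound n L ≤ k / roundLength L) :
    minSep L ≤ dist (motion L f v k) (motion L f w k) := by
  have hv := hf.three_mul_slot_add_three_le v
  have hw := hf.three_mul_slot_add_three_le w
  rcases hk.eq_or_lt with hk | hk
  · rw [motion_of_eq_descentRound hk.symm hv, motion_of_eq_descentRound hk.symm hw]
    exact hf.minSep_le_dist_descent hvw (roundFraction_mem_Icc hf.roundLength_pos k)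
  · rw [motion_of_descentRound_lt hk hv, motion_of_descentRound_lt hk hw]
    simpa [atHeight_targetHeight] using hf.minSep_le_dist_descent hvw ⟨zero_le_one, le_rfl⟩

lemma minSep_le_dist_motion_of_slot_eq {v w : Fin n → ℤ} (hvw : v ≠ w)
    (hs : slot L f v = slot L f w) {k : ℕ} (hk : k / roundLength L < descentRound n L) :
    minSep L ≤ dist (motion L f v k) (motion L f w k) := by
  have hclose : |targetHeight f v - targetHeight f w| < 1 / (2 * L) :=
    hf.abs_sub_lt_of_bucket_eq (by rw [← hf.slot_div v, hs, hf.slot_div w])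
  have hone : minSep L ≤ 1 := hf.minSep_le_one_div_sixteen.trans (by norm_num)
  have hsettled : ∀ σ σ', minSep L ≤
      dist (atHeight (f (latticePoint v)) σ) (atHeight (f (latticePoint w)) σ') :=
    fun _ _ => hf.minSep_le_dist_atHeight hvw fun hfar => absurd hclose (not_lt.2 hfar)
  have hv := hf.three_mul_slot_add_three_le v
  rcases lt_trichotomy (k / roundLength L) (3 * slot L f v) with hlt | heq | hgt
  · rw [motion_of_lt hlt, motion_of_lt (by omega)]
    simpa using hone.trans (one_le_dist_atHeight_latticePoint hvw 0 0)
  · rw [motion_of_eq heq, motion_of_eq (by omega)]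
    exact hone.trans (one_le_dist_atHeight_latticePoint hvw _ _)
  rcases (show k / roundLength L = 3 * slot L f v + 1 ∨ k / roundLength L = 3 * slot L f v + 2 ∨
    3 * slot L f v + 2 < k / roundLength L by omega) with h | h | h
  · rw [motion_of_eq_add_one h, motion_of_eq_add_one (by omega)]
    have hcode : residueCode (9 * L) v = residueCode (9 * L) w := by
      rw [← hf.slot_mod v, hs, hf.slot_mod w]
    exact hone.trans <|
      hf.one_le_dist_cross hvw hcode (roundFraction_mem_Icc hf.roundLength_pos k) _ _
  · rw [motion_of_eq_add_two h hv, motion_of_eq_add_two (by omega) (hs ▸ hv)]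
    exact hsettled _ _
  · rw [motion_of_lt_of_lt h hk, motion_of_lt_of_lt (by omega) hk]
    exact hsettled _ _

lemma bucket_le_of_slot_le {v w : Fin n → ℤ} (h : slot L f w ≤ slot L f v) :
    bucket L f w ≤ bucket L f v := by
  rw [← hf.slot_div v, ← hf.slot_div w]
  exact Nat.div_le_div_right h

lemma exists_motion_eq_atHeight_le {v : Fin n → ℤ} {k : ℕ}
    (h : k / roundLength L ≤ 3 * slot L f v + 1) :
    ∃ c σ, motion L f v k = atHeight c σ ∧ σ ≤ 3 / 4 := by
  have hτ := roundFraction_mem_Icc hf.roundLength_pos k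
  rcases (show k / roundLength L < 3 * slot L f v ∨ k / roundLength L = 3 * slot L f v ∨
    k / roundLength L = 3 * slot L f v + 1 by omega) with h | h | h
  · exact ⟨_, 0, by rw [motion_of_lt h, atHeight_latticePoint_zero], by norm_num⟩
  · refine ⟨_, _, motion_of_eq h, ?_⟩
    rw [AffineMap.lineMap_apply_ring']
    nlinarith [hτ.2]
  · exact ⟨_, _, motion_of_eq_add_one h, le_rfl⟩

lemma exists_motion_eq_atHeight_ge {v : Fin n → ℤ} {k : ℕ}
    (h : 3 * slot L f v < k / roundLength L) (hk : k / roundLength L < descentRound n L) :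
    ∃ c σ, motion L f v k = atHeight c σ ∧ 3 / 4 ≤ σ := by
  have hτ := roundFraction_mem_Icc hf.roundLength_pos k
  have hpark := hf.parkingHeight_mem v
  rcases (show k / roundLength L = 3 * slot L f v + 1 ∨ k / roundLength L = 3 * slot L f v + 2 ∨
    3 * slot L f v + 2 < k / roundLength L by omega) with h | h | h
  · exact ⟨_, _, motion_of_eq_add_one h, le_rfl⟩
  · refine ⟨_, _, motion_of_eq_add_two h (hf.three_mul_slot_add_three_le v), ?_⟩
    rw [AffineMap.lineMap_apply_ring']
    nlinarith [hτ.1, hpark.1]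
  · exact ⟨_, _, motion_of_lt_of_lt h hk, by linarith [hpark.1]⟩

lemma minSep_le_dist_parked {v w : Fin n → ℤ} (hvw : v ≠ w) :
    minSep L ≤ dist (atHeight (f (latticePoint v)) (parkingHeight f v))
      (atHeight (f (latticePoint w)) (parkingHeight f w)) := by
  refine hf.minSep_le_dist_atHeight hvw fun _ => le_of_eq ?_
  rw [parkingHeight, parkingHeight, show ∀ a b : ℝ, 7 / 8 + a / 16 - (7 / 8 + b / 16) =
    (a - b) / 16 from fun _ _ => by ring, abs_div, abs_of_pos (by norm_num : (0 : ℝ) < 16)]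

lemma minSep_le_dist_settling {v w : Fin n → ℤ} (hvw : v ≠ w) (hs : slot L f w < slot L f v)
    {τ : ℝ} (hτ : τ ∈ Icc (0 : ℝ) 1) :
    minSep L ≤ dist
      (atHeight (f (latticePoint v)) (AffineMap.lineMap (3 / 4) (parkingHeight f v) τ))
      (atHeight (f (latticePoint w)) (parkingHeight f w)) := by
  refine hf.minSep_le_dist_atHeight hvw fun hfar => ?_
  -- `w` started earlier, so it lies in a lower bucket and parks strictly above `v`.
  have hbucket : bucket L f w < bucket L f v := (hf.bucket_le_of_slot_le hs.le).lt_of_ne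
    fun heq => not_lt.2 hfar (by rw [abs_sub_comm]; exact hf.abs_sub_lt_of_bucket_eq heq)
  have ht := hf.targetHeight_lt_of_bucket_lt hbucket
  have hrise := mul_le_of_le_one_left (sub_nonneg.2 (by linarith [(hf.parkingHeight_mem v).1] :
    (3 / 4 : ℝ) ≤ parkingHeight f v)) hτ.2
  simp only [parkingHeight] at hrise ⊢
  rw [abs_of_neg (sub_neg.2 ht), AffineMap.lineMap_apply_ring', abs_sub_comm,
    abs_of_nonneg (by linarith)]
  linarith

lemma minSep_le_dist_motion_of_slot_lt {v w : Fin n → ℤ} (hvw : v ≠ w)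
    (hs : slot L f w < slot L f v) {k : ℕ} (hk : k / roundLength L < descentRound n L) :
    minSep L ≤ dist (motion L f v k) (motion L f w k) := by
  have hv := hf.three_mul_slot_add_three_le v
  have hsep := hf.minSep_le_one_div_sixteen
  have hparkw := hf.parkingHeight_mem w
  rcases (show k / roundLength L ≤ 3 * slot L f w ∨
      3 * slot L f w < k / roundLength L ∧ k / roundLength L < 3 * slot L f v ∨
      3 * slot L f v ≤ k / roundLength L ∧ k / roundLength L ≤ 3 * slot L f v + 1 ∨
      k / roundLength L = 3 * slot L f v + 2 ∨ 3 * slot L f v + 2 < k / roundLength L by omega)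
    with h | ⟨h₁, h₂⟩ | ⟨h₁, h₂⟩ | h | h
  · obtain ⟨σ, hσ⟩ :=
      exists_motion_eq_atHeight_latticePoint (L := L) (f := f) (v := v) (k := k) (by omega)
    obtain ⟨σ', hσ'⟩ := exists_motion_eq_atHeight_latticePoint h
    rw [hσ, hσ']
    exact (hsep.trans (by norm_num)).trans (one_le_dist_atHeight_latticePoint hvw _ _)
  · obtain ⟨c, σ, hw, hσ⟩ := hf.exists_motion_eq_atHeight_ge h₁ hk
    rw [motion_of_lt h₂, ← atHeight_latticePoint_zero, hw]
    refine le_trans ?_ abs_sub_le_dist_atHeight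
    rw [zero_sub, abs_neg, abs_of_nonneg (by linarith)]
    linarith
  · obtain ⟨c, σ, hv', hσ⟩ := hf.exists_motion_eq_atHeight_le h₂
    rw [hv', motion_of_lt_of_lt (by omega) hk]
    refine le_trans ?_ abs_sub_le_dist_atHeight
    rw [abs_sub_comm, abs_of_nonneg (by linarith [hparkw.1])]
    linarith [hparkw.1]
  · rw [motion_of_eq_add_two h hv, motion_of_lt_of_lt (by omega) hk]
    exact hf.minSep_le_dist_settling hvw hs (roundFraction_mem_Icc hf.roundLength_pos k)
  · rw [motion_of_lt_of_lt h hk, motion_of_lt_of_lt (by omega) hk]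
    exact hf.minSep_le_dist_parked hvw

lemma minSep_le_dist_motion {v w : Fin n → ℤ} (hvw : v ≠ w) (k : ℕ) :
    minSep L ≤ dist (motion L f v k) (motion L f w k) := by
  rcases le_or_gt (descentRound n L) (k / roundLength L) with hk | hk
  · exact hf.minSep_le_dist_motion_of_descentRound_le hvw hk
  rcases lt_trichotomy (slot L f w) (slot L f v) with hs | hs | hs
  · exact hf.minSep_le_dist_motion_of_slot_lt hvw hs hk
  · exact hf.minSep_le_dist_motion_of_slot_eq hvw hs.symm hk
  · rw [dist_comm]
    exact hf.minSep_le_dist_motion_of_slot_lt hvw.symm hs hk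

lemma exists_waypoint_eq_atHeight (v : Fin n → ℤ) (g : ℕ) :
    ∃ c σ, waypoint L f v g = atHeight c σ ∧
      (c = latticePoint v ∨ c = f (latticePoint v)) ∧ |σ| ≤ 1 - 1 / L := by
  have hL := hf.one_div_cast_le
  have hpark := hf.parkingHeight_mem v
  unfold waypoint
  split_ifs
  · exact ⟨_, 0, (atHeight_latticePoint_zero v).symm, Or.inl rfl, by rw [abs_zero]; linarith⟩
  · exact ⟨_, 3 / 4, rfl, Or.inl rfl, by rw [abs_of_pos (by norm_num)]; linarith⟩
  · exact ⟨_, 3 / 4, rfl, Or.inr rfl, by rw [abs_of_pos (by norm_num)]; linarith⟩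
  · exact ⟨_, _, rfl, Or.inr rfl,
      by rw [abs_of_pos (by linarith [hpark.1])]; linarith [hpark.2]⟩
  · exact ⟨_, _, (atHeight_targetHeight v).symm, Or.inr rfl, hf.abs_targetHeight_le v⟩

lemma dist_waypoint_le (v : Fin n → ℤ) (g g' : ℕ) :
    dist (waypoint L f v g) (waypoint L f v g') ≤ 2 * L + 2 := by
  obtain ⟨c, σ, hc, hcv, hσ⟩ := hf.exists_waypoint_eq_atHeight v g
  obtain ⟨c', σ', hc', hcv', hσ'⟩ := hf.exists_waypoint_eq_atHeight v g'
  have hhor : dist (atHeight c 0) (atHeight c' 0) ≤ 2 * L := by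
    have hmove :
        dist (atHeight (latticePoint v) 0) (atHeight (f (latticePoint v)) 0) ≤ 2 * L := by
      rw [atHeight_latticePoint_zero]; exact hf.dist_latticePoint_target_le v
    have : (0 : ℝ) ≤ 2 * L := by have := hf.cast_pos; positivity
    rcases hcv with rfl | rfl <;> rcases hcv' with rfl | rfl <;>
      first | assumption | (rw [dist_comm]; assumption) | (rw [dist_self]; assumption)
  have hvert : |σ - σ'| ≤ 2 := by
    rw [abs_le] at *; constructor <;> linarith [one_div_pos.2 hf.cast_pos]
  rw [hc, hc']
  linarith [dist_atHeight_le (x := c) (y := c') (s := σ) (s' := σ')]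

lemma dist_motion_succ_le (v : Fin n → ℤ) (k : ℕ) :
    dist (motion L f v (k + 1)) (motion L f v k) ≤ minSep L / 6 := by
  have hL : (16 : ℝ) ≤ L := by exact_mod_cast hf.sixteen_le
  calc _ ≤ dist (waypoint L f v (k / roundLength L)) (waypoint L f v (k / roundLength L + 1)) /
        roundLength L := dist_piecewiseLinear_succ_le hf.roundLength_pos _ k
    _ ≤ (2 * L + 2) / roundLength L := by gcongr; exact hf.dist_waypoint_le v _ _
    _ ≤ minSep L / 6 := by
        rw [roundLength, minSep]
        push_cast
        rw [div_le_div_iff₀ (by positivity) (by norm_num), div_mul_eq_mul_div,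
          le_div_iff₀ (by positivity)]
        nlinarith

lemma exists_motion_eq_atHeight (v : Fin n → ℤ) (k : ℕ) :
    ∃ c σ, motion L f v k = atHeight c σ ∧ |σ| ≤ 1 - 1 / L := by
  obtain ⟨c, σ, hc, -, hσ⟩ := hf.exists_waypoint_eq_atHeight v (k / roundLength L)
  obtain ⟨c', σ', hc', -, hσ'⟩ := hf.exists_waypoint_eq_atHeight v (k / roundLength L + 1)
  refine ⟨_, _, by rw [motion, piecewiseLinear, hc, hc', lineMap_atHeight], abs_le.2 ?_⟩
  exact (convex_Icc _ _).lineMap_mem (abs_le.1 hσ) (abs_le.1 hσ')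
    (roundFraction_mem_Icc hf.roundLength_pos k)

lemma minSep_div_three_le_dist_motion {x : EuclideanSpace ℝ (Fin (n + 1))}
    (hx : x ∈ wallSet (n + 1) (Nat.le_add_left 1 n)) (v : Fin n → ℤ) (k : ℕ) :
    minSep L / 3 ≤ dist x (motion L f v k) := by
  obtain ⟨c, σ, hm, hσ⟩ := hf.exists_motion_eq_atHeight v k
  have hwall : |x (Fin.last n)| = 1 := by
    have hx' : x (Fin.last n) = -1 ∨ x (Fin.last n) = 1 := hx
    rcases hx' with h | h <;> simp [h]
  have hsep : minSep L / 3 ≤ 1 / L := by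
    rw [minSep]; have := hf.cast_pos
    rw [div_div, one_div_le_one_div (by positivity) this]; linarith
  rw [hm, ← atHeight_self (x := x)]
  refine le_trans ?_ abs_sub_le_dist_atHeight
  linarith [abs_sub_abs_le_abs_sub (x (Fin.last n)) σ]

lemma motion_numSteps (v : Fin n → ℤ) : motion L f v (numSteps n L) = f (latticePoint v) := by
  have := hf.three_mul_slot_add_three_le v
  rw [motion, numSteps, piecewiseLinear_mul hf.roundLength_pos,
    waypoint_of_descentRound_lt (by omega) (by omega)]

theorem exists_isBilipOn_extension :
    ∃ F, IsBilipOn (2 ^ numSteps n L) F univ ∧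
      EqOn F f (wallSet (n + 1) (Nat.le_add_left 1 n) ∪ range latticePoint) := by
  have hκ : 0 < minSep L := by rw [minSep]; have := hf.cast_pos; positivity
  obtain ⟨F, hF, hFP, hFfix⟩ := exists_isBilipOn_of_separated_steps hκ
    (fun k v => motion L f v k) (fun k _ _ hvw => hf.minSep_le_dist_motion hvw k)
    (fun k v => hf.dist_motion_succ_le v k) (numSteps n L)
  refine ⟨F, hF, ?_⟩
  rintro x (hx | ⟨v, rfl⟩)
  · rw [hFfix x fun k v => hf.minSep_div_three_le_dist_motion hx v k,
      hf.eq_self_of_mem_wallSet x hx]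
  · simpa only [motion_zero, hf.motion_numSteps] using hFP v

end AdmissibleMap

end Schedule

lemma numSteps_le {n L : ℕ} (hL : 1 ≤ L) :
    numSteps n L ≤ 2 ^ 3 * 3 ^ (33 * (n + 1)) * (n + 1) ^ (2 * (n + 1)) * L ^ (26 * (n + 1)) := by
  have hK : 1 ≤ L * (9 * L) ^ n := Nat.one_le_iff_ne_zero.2 (by positivity)
  have h3 : 7800 * 3 ^ (2 * n) ≤ 2 ^ 3 * 3 ^ (33 * (n + 1)) := by
    rw [show 33 * (n + 1) = 33 + 2 * n + 31 * n by ring, pow_add, pow_add]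
    nlinarith [Nat.one_le_pow (31 * n) 3 (by norm_num), Nat.one_le_pow (2 * n) 3 (by norm_num)]
  calc numSteps n L ≤ 13 * (L * (9 * L) ^ n) * (600 * L ^ 2) := by
        unfold numSteps descentRound roundLength; gcongr; nlinarith
    _ = 7800 * 3 ^ (2 * n) * L ^ (n + 3) := by rw [mul_pow, pow_mul]; ring
    _ ≤ 2 ^ 3 * 3 ^ (33 * (n + 1)) * L ^ (26 * (n + 1)) :=
        Nat.mul_le_mul h3 (Nat.pow_le_pow_right hL (by omega))
    _ ≤ 2 ^ 3 * 3 ^ (33 * (n + 1)) * (n + 1) ^ (2 * (n + 1)) * L ^ (26 * (n + 1)) :=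
        Nat.mul_le_mul_right _ (Nat.le_mul_of_pos_right _ (Nat.pow_pos n.succ_pos))

theorem stmt14 (d L : ℕ) (hd : 2 ≤ d) (hL : 12 * d ≤ L)
    (f : EuclideanSpace ℝ (Fin d) → EuclideanSpace ℝ (Fin d))
    (hf : IsBilipOn (L : ℝ) f
      (wallSet d (by omega) ∪ midLattice d (by omega)))
    (hid : ∀ x ∈ wallSet d (by omega : 1 ≤ d), f x = x)
    (hrange : ∀ x ∈ midLattice d (by omega : 1 ≤ d),
      f x ⟨d - 1, by omega⟩ ∈ Set.Icc (-1 : ℝ) 1) :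
    ∃ F : EuclideanSpace ℝ (Fin d) → EuclideanSpace ℝ (Fin d),
      IsBilipOn
        ((2 : ℝ) ^ 14 * d * (L : ℝ) ^ 8 *
          (2 : ℝ) ^ (2 ^ 3 * 3 ^ (33 * d) * d ^ (2 * d) * L ^ (26 * d)))
        F Set.univ ∧
      Set.EqOn F f (wallSet d (by omega) ∪ midLattice d (by omega)) := by
  obtain ⟨n, rfl⟩ : ∃ n, d = n + 1 := ⟨d - 1, by omega⟩
  have hadm : AdmissibleMap n L f :=
    { sixteen_le := by omega
      isBilipOn := hf.mono_set <| union_subset_union_right _ <|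
        range_subset_iff.2 latticePoint_mem_midLattice
      eq_self_of_mem_wallSet := hid
      apply_last_mem := fun v => hrange _ (latticePoint_mem_midLattice v) }
  obtain ⟨F, hF, hFf⟩ := hadm.exists_isBilipOn_extension
  refine ⟨F, hF.mono (by positivity) ?_,
    hFf.mono (union_subset_union_right _ midLattice_subset_range)⟩
  have hL₁ : (1 : ℝ) ≤ L := by exact_mod_cast (by omega : 1 ≤ L)
  have hd₁ : (1 : ℝ) ≤ ((n + 1 : ℕ) : ℝ) := by exact_mod_cast n.succ_pos
  calc (2 : ℝ) ^ numSteps n L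
      ≤ 2 ^ (2 ^ 3 * 3 ^ (33 * (n + 1)) * (n + 1) ^ (2 * (n + 1)) * L ^ (26 * (n + 1))) :=
        pow_le_pow_right₀ one_le_two (numSteps_le (by omega))
    _ ≤ _ := le_mul_of_one_le_left (by positivity) <| one_le_mul_of_one_le_of_one_le
        (one_le_mul_of_one_le_of_one_le (by norm_num) hd₁) (one_le_pow₀ hL₁)
end
end
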